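/- arXiv:1703.00666 — 11 statements merged into one kernel-verified Lean document; each statement's English description precedes it below -/
import Mathlib

section
/- Let Γ be a G-arc-transitive digraph, where G is a group of automorphisms of Γ, let s ≥ 2 be an integer, and let v_0 → v_1 → ⋯ → v_s be an s-arc of Γ. Then Γ is (G,s)-arc-transitive if and only if for each i ∈ {1,…,s−1} the pointwise stabilizer factorizes as G_{v_1⋯v_i} = G_{v_0v_1⋯v_i} · G_{v_1⋯v_iv_{i+1}}. -/
/-!
Write `G_{v_a⋯v_b}` for the pointwise stabiliser in `G` of `v_a, …, v_b`. Everything hinges on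
whether `G_{v_1⋯v_t}` moves every in-neighbour of `v_1` to `v_0`. For `t = i + 1` this is
equivalent, by a Frattini-type argument, to `G_{v_1⋯v_i} = G_{v_0⋯v_i} G_{v_1⋯v_{i+1}}`, given
the same property for `t = i`. Transitivity on `t`-arcs together with this property for `t + 1`
gives transitivity on `(t+1)`-arcs: first match the last `t` vertices, then move the first one
while fixing the rest.
-/

open scoped Pointwise

/-- An `s`-arc of the digraph `(V, r)`: vertices `v 0, v 1, …, v s` with
`v i → v (i+1)` for all `i < s`. -/
def IsSArc {V : Type*} (r : V → V → Prop) (s : ℕ) (v : ℕ → V) : Prop :=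
  ∀ i < s, r (v i) (v (i + 1))

/-- The digraph `(V, r)` is `(G, s)`-arc-transitive: `G` acts transitively on `s`-arcs. -/
def ArcTrans {V : Type*} (r : V → V → Prop) (G : Subgroup (Equiv.Perm V)) (s : ℕ) : Prop :=
  ∀ v w : ℕ → V, IsSArc r s v → IsSArc r s w → ∃ g ∈ G, ∀ i ≤ s, g (v i) = w i

open Equiv

section

variable {V : Type*} {r : V → V → Prop} {G : Subgroup (Perm V)} {v : ℕ → V} {s t i : ℕ}

/-- The pointwise stabiliser `G_{v_a⋯v_b}`. -/
def arcStabilizer (G : Subgroup (Perm V)) (v : ℕ → V) (a b : ℕ) : Set (Perm V) :=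
  {g | g ∈ G ∧ ∀ j, a ≤ j → j ≤ b → g (v j) = v j}

/-- `G_{v_1⋯v_t}` is transitive on the in-neighbours of `v_1`, one of which is `v_0`. -/
def InNbrTransitive (r : V → V → Prop) (G : Subgroup (Perm V)) (v : ℕ → V) (t : ℕ) : Prop :=
  ∀ x, r x (v 1) → ∃ g ∈ arcStabilizer G v 1 t, g x = v 0

namespace IsSArc

theorem mono (hv : IsSArc r s v) (hts : t ≤ s) : IsSArc r t v :=
  fun j hj => hv j (by omega)

theorem tail (hv : IsSArc r (s + 1) v) : IsSArc r s (fun j => v (j + 1)) :=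
  fun j hj => hv (j + 1) (by omega)

theorem update_zero (hv : IsSArc r s v) {x : V} (hx : r x (v 1)) :
    IsSArc r s (Function.update v 0 x) := by
  intro j hj
  rcases j with _ | j
  · simpa using hx
  · simpa using hv (j + 1) hj

end IsSArc

theorem arcTrans_of_forall_exists_apply_eq
    (h : ∀ u, IsSArc r s u → ∃ g ∈ G, ∀ i ≤ s, g (u i) = v i) : ArcTrans r G s := by
  intro u w hu hw
  obtain ⟨g, hgG, hg⟩ := h u hu
  obtain ⟨k, hkG, hk⟩ := h w hw
  refine ⟨k⁻¹ * g, mul_mem (inv_mem hkG) hgG, fun i hi => ?_⟩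
  rw [Perm.mul_apply, hg i hi, ← hk i hi, Perm.inv_eq_iff_eq]

theorem arcStabilizer_mul_subset :
    arcStabilizer G v 0 i * arcStabilizer G v 1 (i + 1) ⊆ arcStabilizer G v 1 i := by
  rintro _ ⟨k, ⟨hkG, hk⟩, l, ⟨hlG, hl⟩, rfl⟩
  refine ⟨mul_mem hkG hlG, fun j hj1 hji => ?_⟩
  rw [Perm.mul_apply, hl j hj1 (by omega), hk j (by omega) hji]

theorem ArcTrans.inNbrTransitive (hT : ArcTrans r G s) (hv : IsSArc r s v) (hts : t ≤ s) :
    InNbrTransitive r G v t := by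
  intro x hx
  obtain ⟨g, hgG, hg⟩ := hT _ v (hv.update_zero hx) hv
  refine ⟨g, ⟨hgG, fun j hj1 hjt => ?_⟩, by simpa using hg 0 (Nat.zero_le s)⟩
  simpa [Function.update_of_ne (show j ≠ 0 by omega)] using hg j (by omega)

theorem arcStabilizer_subset_mul (hG : ∀ g ∈ G, ∀ a b, r a b ↔ r (g a) (g b))
    (h01 : r (v 0) (v 1)) (hi : 1 ≤ i) (hT : InNbrTransitive r G v (i + 1)) :
    arcStabilizer G v 1 i ⊆ arcStabilizer G v 0 i * arcStabilizer G v 1 (i + 1) := by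
  rintro a ⟨haG, ha⟩
  have ha1 : a⁻¹ (v 1) = v 1 := by rw [Perm.inv_eq_iff_eq, ha 1 le_rfl hi]
  have hx : r (a⁻¹ (v 0)) (v 1) := ha1 ▸ (hG _ (inv_mem haG) _ _).mp h01
  obtain ⟨g, ⟨hgG, hg⟩, hgx⟩ := hT _ hx
  refine ⟨a * g⁻¹, ⟨mul_mem haG (inv_mem hgG), fun j _ hji => ?_⟩, g, ⟨hgG, hg⟩,
    inv_mul_cancel_right a g⟩
  rcases j with _ | j
  · rw [Perm.mul_apply, Perm.inv_eq_iff_eq.mpr hgx.symm]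
    simp
  · rw [Perm.mul_apply, Perm.inv_eq_iff_eq.mpr (hg (j + 1) (by omega) (by omega)).symm,
      ha (j + 1) (by omega) hji]

theorem InNbrTransitive.succ (hT : InNbrTransitive r G v t)
    (hfac : arcStabilizer G v 1 t ⊆ arcStabilizer G v 0 t * arcStabilizer G v 1 (t + 1)) :
    InNbrTransitive r G v (t + 1) := by
  intro x hx
  obtain ⟨h, hh, hhx⟩ := hT x hx
  obtain ⟨k, ⟨-, hk⟩, l, hl, rfl⟩ := hfac hh
  refine ⟨l, hl, k.injective ?_⟩
  rw [← Perm.mul_apply, hhx, hk 0 le_rfl (Nat.zero_le t)]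

theorem ArcTrans.succ (hG : ∀ g ∈ G, ∀ a b, r a b ↔ r (g a) (g b)) (hT : ArcTrans r G t)
    (hv : IsSArc r (t + 1) v) (hin : InNbrTransitive r G v (t + 1)) :
    ArcTrans r G (t + 1) := by
  refine arcTrans_of_forall_exists_apply_eq (v := v) fun u hu => ?_
  obtain ⟨g, hgG, hg⟩ := hT _ _ hu.tail hv.tail
  have hx : r (g (u 0)) (v 1) := hg 0 (Nat.zero_le t) ▸ (hG g hgG _ _).mp (hu 0 (by omega))
  obtain ⟨h, ⟨hhG, hh⟩, hhx⟩ := hin _ hx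
  refine ⟨h * g, mul_mem hhG hgG, fun i hi => ?_⟩
  rcases i with _ | i
  · exact hhx
  · rw [Perm.mul_apply, hg i (by omega), hh (i + 1) (by omega) hi]

end

theorem stmt1_general {V : Type*} (r : V → V → Prop)
    (G : Subgroup (Equiv.Perm V))
    (hGaut : ∀ g ∈ G, ∀ a b, r a b ↔ r (g a) (g b))
    (harc : ArcTrans r G 1)
    (s : ℕ) (hs : 2 ≤ s)
    (v : ℕ → V) (hv : IsSArc r s v) :
    ArcTrans r G s ↔
      ∀ i, 1 ≤ i → i ≤ s - 1 →
        {g : Equiv.Perm V | g ∈ G ∧ ∀ j, 1 ≤ j → j ≤ i → g (v j) = v j} =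
          {g : Equiv.Perm V | g ∈ G ∧ ∀ j, j ≤ i → g (v j) = v j} *
            {g : Equiv.Perm V | g ∈ G ∧ ∀ j, 1 ≤ j → j ≤ i + 1 → g (v j) = v j} := by
  have h0 : ∀ i, {g : Equiv.Perm V | g ∈ G ∧ ∀ j, j ≤ i → g (v j) = v j} =
      arcStabilizer G v 0 i := fun i => by simp [arcStabilizer]
  simp only [h0]
  constructor
  · intro hT i hi his
    exact (arcStabilizer_subset_mul hGaut (hv 0 (by omega)) hi
      (hT.inNbrTransitive hv (by omega))).antisymm arcStabilizer_mul_subset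
  · intro hfac
    have hin : ∀ t, 1 ≤ t → t ≤ s → InNbrTransitive r G v t :=
      Nat.le_induction (fun _ => harc.inNbrTransitive (hv.mono (by omega)) le_rfl)
        fun t ht ih hts => (ih (by omega)).succ (hfac t ht (by omega)).subset
    have hT : ∀ t, 1 ≤ t → t ≤ s → ArcTrans r G t :=
      Nat.le_induction (fun _ => harc)
        fun t ht ih hts => (ih (by omega)).succ hGaut (hv.mono hts) (hin (t + 1) (by omega) hts)
    exact hT s (by omega) le_rfl

/-- Let `Γ` be a `G`-arc-transitive digraph, `s ≥ 2`, and
`v 0 → v 1 → ⋯ → v s` an `s`-arc. Then `Γ` is `(G,s)`-arc-transitive iff for each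
`i ∈ {1,…,s−1}` we have `G_{v_1⋯v_i} = G_{v_0v_1⋯v_i} ⬝ G_{v_1⋯v_i v_{i+1}}`. -/
theorem stmt1 {V : Type*} [Finite V] (r : V → V → Prop)
    (hirr : ∀ a, ¬ r a a) (hasym : ∀ a b, r a b → ¬ r b a)
    (G : Subgroup (Equiv.Perm V))
    (hGaut : ∀ g ∈ G, ∀ a b, r a b ↔ r (g a) (g b))
    (harc : ArcTrans r G 1)
    (s : ℕ) (hs : 2 ≤ s)
    (v : ℕ → V) (hv : IsSArc r s v) :
    ArcTrans r G s ↔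
      ∀ i, 1 ≤ i → i ≤ s - 1 →
        {g : Equiv.Perm V | g ∈ G ∧ ∀ j, 1 ≤ j → j ≤ i → g (v j) = v j} =
          {g : Equiv.Perm V | g ∈ G ∧ ∀ j, j ≤ i → g (v j) = v j} *
            {g : Equiv.Perm V | g ∈ G ∧ ∀ j, 1 ≤ j → j ≤ i + 1 → g (v j) = v j} :=
  stmt1_general r G hGaut harc s hs v hv
end

section
/- Let Γ be a G-arc-transitive digraph, where G is a group of automorphisms of Γ, let s ≥ 2 be an integer, let v be a vertex of Γ, and let g ∈ G be such that v → v^g. Then Γ is (G,s)-arc-transitive if and only if for each i ∈ {1,…,s−1}, ⋂_{j=0}^{i−1} g^{−j}G_v g^{j} = (⋂_{j=0}^{i} g^{−(j−1)}G_v g^{j−1}) · (⋂_{j=0}^{i} g^{−j}G_v g^{j}), where G_v denotes the stabilizer of v in G. -/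
/-!
Write `vₜ = (gᵗ) v`, so that `(vₜ)` is a two-way infinite walk through `v`, and `G[a,b]` for the
pointwise stabiliser in `G` of `v_a, …, v_b`; the three intersections of the statement are
`G[1-i,0]`, `G[1-i,1]` and `G[-i,0]`. Mapping `(i+1)`-arcs to `v_{-i}, …, v₀, v₁` shows that a
`(G,i)`-arc-transitive digraph is `(G,i+1)`-arc-transitive iff `G[-i,0]` is transitive on the
out-neighbours of `v`. These form a single `G[1-i,0]`-orbit, and a subgroup `B` of a group `A` is
transitive on an `A`-orbit `A • x` iff `A = A_x B` (Frattini argument). Since every arc extends,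
`(G,s)`-arc-transitivity implies `(G,i)`-arc-transitivity for `1 ≤ i ≤ s`, and induction on `i`
finishes the proof.
-/

open scoped Pointwise

/-- The conjugate `g⁻ʲ G_v gʲ` of the stabilizer of `v`, for `j : ℤ`. -/
def ConjStab {V : Type*} (G : Subgroup (Equiv.Perm V)) (v : V) (g : Equiv.Perm V) (j : ℤ) :
    Set (Equiv.Perm V) :=
  (fun x => (g ^ j)⁻¹ * x * g ^ j) '' {x : Equiv.Perm V | x ∈ G ∧ x v = v}

open MulAction Function Equiv

theorem orbit_subset_orbit_iff_eq_inf_stabilizer_mul {M α : Type*} [Group M] [MulAction M α]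
    {A B : Subgroup M} (hBA : B ≤ A) (x : α) :
    orbit A x ⊆ orbit B x ↔ (A : Set M) = (A ⊓ stabilizer M x : Subgroup M) * B := by
  constructor
  · intro h
    refine subset_antisymm (fun a ha => ?_) ?_
    · obtain ⟨b, hb⟩ := h (mem_orbit x (⟨a, ha⟩⁻¹ : A))
      have hb' : (b : M) • x = a⁻¹ • x := hb
      have hab : (a * b) • x = x := by rw [mul_smul, hb', smul_inv_smul]
      exact ⟨a * b, Subgroup.mem_inf.mpr ⟨mul_mem ha (hBA b.2), hab⟩, (b : M)⁻¹, inv_mem b.2,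
        by group⟩
    · rintro _ ⟨a, ha, b, hb, rfl⟩
      exact mul_mem (Subgroup.mem_inf.mp ha).1 (hBA hb)
  · rintro h _ ⟨a, rfl⟩
    have ha : (a : M)⁻¹ ∈ (A : Set M) := inv_mem a.2
    rw [h] at ha
    obtain ⟨a', ha', b, hb, hab⟩ := ha
    refine ⟨⟨b⁻¹, inv_mem hb⟩, ?_⟩
    have hab' : (a : M) = b⁻¹ * a'⁻¹ := by
      rw [← mul_inv_rev, show a' * b = (a : M)⁻¹ from hab, inv_inv]
    change (b⁻¹ : M) • x = (a : M) • x
    rw [hab', mul_smul, inv_smul_eq_iff.mpr (Subgroup.mem_inf.mp ha').2.symm]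

theorem iff_forall_of_succ_iff {P Q : ℕ → Prop} (h1 : P 1) (hdown : ∀ n, 1 ≤ n → P (n + 1) → P n)
    (hstep : ∀ i, 1 ≤ i → P i → (P (i + 1) ↔ Q i)) {s : ℕ} (hs : 1 ≤ s) :
    P s ↔ ∀ i, 1 ≤ i → i ≤ s - 1 → Q i := by
  induction s, hs using Nat.le_induction with
  | base => exact ⟨fun _ i hi hi' => absurd hi' (by omega), fun _ => h1⟩
  | succ n hn ih =>
    have hsucc : P (n + 1) ↔ P n ∧ Q n :=
      ⟨fun h => ⟨hdown n hn h, (hstep n hn (hdown n hn h)).mp h⟩,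
        fun h => (hstep n hn h.1).mpr h.2⟩
    rw [hsucc, ih]
    refine ⟨fun h i hi hi' => ?_, fun h => ⟨fun i hi hi' => h i hi (by omega), h n hn (by omega)⟩⟩
    rcases Nat.lt_or_ge i n with hin | hin
    · exact h.1 i hi (by omega)
    · exact (show i = n by omega) ▸ h.2

section Digraph

variable {V : Type*} {r : V → V → Prop} {G : Subgroup (Perm V)} {v : V} {g : Perm V}

theorem IsSArc.of_succ {n : ℕ} {u : ℕ → V} (hu : IsSArc r (n + 1) u) : IsSArc r n u :=
  fun i hi => hu i (by omega)

theorem IsSArc.update_succ {n : ℕ} {u : ℕ → V} (hu : IsSArc r n u) {z : V} (hz : r (u n) z) :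
    IsSArc r (n + 1) (update u (n + 1) z) := by
  intro i hi
  rcases Nat.lt_or_ge i n with hin | hin
  · rw [update_of_ne (by omega), update_of_ne (by omega)]
    exact hu i hin
  · obtain rfl : i = n := by omega
    rw [update_of_ne (by omega), update_self]
    exact hz

theorem arcTrans_of_forall_exists_apply_eq_s2 {n : ℕ} (c : ℕ → V)
    (h : ∀ u, IsSArc r n u → ∃ x ∈ G, ∀ k ≤ n, x (u k) = c k) : ArcTrans r G n := by
  intro u w hu hw
  obtain ⟨x, hx, hxu⟩ := h u hu
  obtain ⟨y, hy, hyw⟩ := h w hw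
  refine ⟨y⁻¹ * x, mul_mem (inv_mem hy) hx, fun k hk => ?_⟩
  rw [Perm.mul_apply, hxu k hk, Perm.inv_eq_iff_eq, hyw k hk]

theorem ArcTrans.of_succ (hout : ∀ a b, r a b → ∃ c, r b c) {n : ℕ} (hn : 1 ≤ n)
    (h : ArcTrans r G (n + 1)) : ArcTrans r G n := by
  obtain ⟨m, rfl⟩ : ∃ m, n = m + 1 := ⟨n - 1, by omega⟩
  intro u w hu hw
  obtain ⟨zu, hzu⟩ := hout _ _ (hu m (by omega))
  obtain ⟨zw, hzw⟩ := hout _ _ (hw m (by omega))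
  obtain ⟨x, hx, hxuw⟩ := h _ _ (hu.update_succ hzu) (hw.update_succ hzw)
  refine ⟨x, hx, fun k hk => ?_⟩
  simpa [update_of_ne (show k ≠ m + 1 + 1 by omega)] using hxuw k (by omega)

theorem rel_zpow_apply (hGaut : ∀ g ∈ G, ∀ a b, r a b ↔ r (g a) (g b)) (hg : g ∈ G)
    (hvg : r v (g v)) (t : ℤ) : r ((g ^ t) v) ((g ^ (t + 1)) v) := by
  rw [zpow_add_one, Perm.mul_apply]
  exact (hGaut _ (G.zpow_mem hg t) _ _).mp hvg

theorem isSArc_zpow_sub (hGaut : ∀ g ∈ G, ∀ a b, r a b ↔ r (g a) (g b)) (hg : g ∈ G)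
    (hvg : r v (g v)) (n : ℕ) (N : ℤ) : IsSArc r n (fun k => (g ^ ((k : ℤ) - N)) v) := by
  intro i _
  have := rel_zpow_apply hGaut hg hvg ((i : ℤ) - N)
  rwa [show (i : ℤ) - N + 1 = ((i + 1 : ℕ) : ℤ) - N by push_cast; ring] at this

theorem exists_rel_of_rel (hGaut : ∀ g ∈ G, ∀ a b, r a b ↔ r (g a) (g b))
    (harc : ArcTrans r G 1) (hg : g ∈ G) (hvg : r v (g v)) {a b : V} (hab : r a b) :
    ∃ c, r b c := by
  obtain ⟨x, hx, hxab⟩ := harc _ (fun k => if k = 0 then a else b)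
    (isSArc_zpow_sub hGaut hg hvg 1 0) (fun i hi => by simpa [show i = 0 by omega] using hab)
  refine ⟨x ((g ^ (2 : ℤ)) v), ?_⟩
  have hx1 : x (g v) = b := by simpa using hxab 1 le_rfl
  simpa [hx1] using (hGaut x hx _ _).mp (rel_zpow_apply hGaut hg hvg 1)

def arcStab (G : Subgroup (Perm V)) (v : V) (g : Perm V) (a b : ℤ) : Subgroup (Perm V) :=
  G ⊓ ⨅ t ∈ Set.Icc a b, stabilizer (Perm V) ((g ^ t) v)

theorem mem_arcStab {x : Perm V} {a b : ℤ} :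
    x ∈ arcStab G v g a b ↔ x ∈ G ∧ ∀ t, a ≤ t → t ≤ b → x ((g ^ t) v) = (g ^ t) v := by
  simp [arcStab, Subgroup.mem_inf, Subgroup.mem_iInf, mem_stabilizer_iff, Perm.smul_def]

theorem arcStab_mono {a a' b b' : ℤ} (ha : a ≤ a') (hb : b' ≤ b) :
    arcStab G v g a b ≤ arcStab G v g a' b' := fun x hx => by
  rw [mem_arcStab] at hx ⊢
  exact ⟨hx.1, fun t ht ht' => hx.2 t (ha.trans ht) (ht'.trans hb)⟩

theorem arcStab_zero_inf_stabilizer {a : ℤ} (ha : a ≤ 0) :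
    arcStab G v g a 0 ⊓ stabilizer (Perm V) (g v) = arcStab G v g a 1 := by
  ext x
  simp only [Subgroup.mem_inf, mem_arcStab, mem_stabilizer_iff, Perm.smul_def]
  constructor
  · rintro ⟨⟨hx, hfix⟩, hgv⟩
    refine ⟨hx, fun t ht ht' => ?_⟩
    rcases (show t ≤ 0 ∨ t = 1 by omega) with ht0 | rfl
    · exact hfix t ht ht0
    · simpa using hgv
  · rintro ⟨hx, hfix⟩
    exact ⟨⟨hx, fun t ht ht' => hfix t ht (by omega)⟩, by simpa using hfix 1 (by omega) le_rfl⟩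

theorem orbit_arcStab_subset (hGaut : ∀ g ∈ G, ∀ a b, r a b ↔ r (g a) (g b))
    (hvg : r v (g v)) {a b : ℤ} (ha : a ≤ 0) (hb : 0 ≤ b) :
    orbit (arcStab G v g a b) (g v) ⊆ {u | r v u} := by
  rintro _ ⟨⟨y, hy⟩, rfl⟩
  rw [mem_arcStab] at hy
  have hyv : y v = v := by simpa using hy.2 0 ha hb
  simpa [hyv] using (hGaut y hy.1 _ _).mp hvg

theorem mem_orbit_arcStab_of_arcTrans (hGaut : ∀ g ∈ G, ∀ a b, r a b ↔ r (g a) (g b))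
    (hg : g ∈ G) (hvg : r v (g v)) {n : ℕ} (hn : ArcTrans r G (n + 1)) {u : V} (hu : r v u) :
    u ∈ orbit (arcStab G v g (-n) 0) (g v) := by
  set c : ℕ → V := fun k => (g ^ ((k : ℤ) - n)) v with hc
  have hcn : c n = v := by simp [hc]
  -- `y` maps the arc `v₋ₙ, …, v₀, v₁` to `v₋ₙ, …, v₀, u`
  obtain ⟨y, hy, hyc⟩ := hn _ _ (isSArc_zpow_sub hGaut hg hvg (n + 1) n)
    ((isSArc_zpow_sub hGaut hg hvg n n).update_succ (hcn ▸ hu))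
  refine ⟨⟨y, mem_arcStab.mpr ⟨hy, fun t ht ht' => ?_⟩⟩, ?_⟩
  · have := hyc (t + n).toNat (by omega)
    rwa [update_of_ne (by omega), show ((t + n).toNat : ℤ) - n = t by omega] at this
  · simpa using hyc (n + 1) le_rfl

theorem arcTrans_succ_of_forall_mem_orbit (hGaut : ∀ g ∈ G, ∀ a b, r a b ↔ r (g a) (g b))
    (hg : g ∈ G) (hvg : r v (g v)) {n : ℕ} (hn : ArcTrans r G n)
    (horb : ∀ u, r v u → u ∈ orbit (arcStab G v g (-n) 0) (g v)) : ArcTrans r G (n + 1) := by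
  set c : ℕ → V := fun k => (g ^ ((k : ℤ) - n)) v with hc
  refine arcTrans_of_forall_exists_apply_eq_s2 c fun u hu => ?_
  obtain ⟨x, hx, hxu⟩ := hn u c hu.of_succ (isSArc_zpow_sub hGaut hg hvg n n)
  have hxn : x (u n) = v := by simpa [hc] using hxu n le_rfl
  obtain ⟨⟨y, hy⟩, hyx⟩ := horb (x (u (n + 1)))
    (by simpa [hxn] using (hGaut x hx _ _).mp (hu n (by omega)))
  rw [mem_arcStab] at hy
  refine ⟨y⁻¹ * x, mul_mem (inv_mem hy.1) hx, fun k hk => ?_⟩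
  rw [Perm.mul_apply, Perm.inv_eq_iff_eq]
  rcases Nat.lt_or_ge k (n + 1) with hk' | hk'
  · rw [hxu k (by omega), hy.2 _ (by omega) (by omega)]
  · obtain rfl : k = n + 1 := by omega
    rw [← hyx]
    simp [hc]

theorem arcTrans_succ_iff_forall_mem_orbit (hGaut : ∀ g ∈ G, ∀ a b, r a b ↔ r (g a) (g b))
    (hg : g ∈ G) (hvg : r v (g v)) {n : ℕ} (hn : ArcTrans r G n) :
    ArcTrans r G (n + 1) ↔ ∀ u, r v u → u ∈ orbit (arcStab G v g (-n) 0) (g v) :=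
  ⟨fun h _ hu => mem_orbit_arcStab_of_arcTrans hGaut hg hvg h hu,
    arcTrans_succ_of_forall_mem_orbit hGaut hg hvg hn⟩

theorem arcTrans_add_two_iff (hGaut : ∀ g ∈ G, ∀ a b, r a b ↔ r (g a) (g b))
    (hg : g ∈ G) (hvg : r v (g v)) {m : ℕ} (hm : ArcTrans r G (m + 1)) :
    ArcTrans r G (m + 2) ↔ (arcStab G v g (-m) 0 : Set (Perm V)) =
      arcStab G v g (-m) 1 * arcStab G v g (-(m + 1)) 0 := by
  have hnbr : orbit (arcStab G v g (-m) 0) (g v) = {u | r v u} :=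
    subset_antisymm (orbit_arcStab_subset hGaut hvg (by omega) le_rfl)
      fun u hu => mem_orbit_arcStab_of_arcTrans hGaut hg hvg hm hu
  rw [← arcStab_zero_inf_stabilizer (by omega),
    ← orbit_subset_orbit_iff_eq_inf_stabilizer_mul (arcStab_mono (by omega) le_rfl), hnbr,
    arcTrans_succ_iff_forall_mem_orbit hGaut hg hvg hm]
  push_cast
  rfl

end Digraph

section ConjStab

variable {V : Type*} {G : Subgroup (Perm V)} {v : V} {g : Perm V}

theorem mem_conjStab (hg : g ∈ G) {x : Perm V} {j : ℤ} :
    x ∈ ConjStab G v g j ↔ x ∈ G ∧ x ((g ^ (-j)) v) = (g ^ (-j)) v := by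
  have hgj := G.zpow_mem hg j
  constructor
  · rintro ⟨y, ⟨hy, hyv⟩, rfl⟩
    refine ⟨mul_mem (mul_mem (inv_mem hgj) hy) hgj, ?_⟩
    simp [zpow_neg, Perm.mul_apply, hyv]
  · rintro ⟨hx, hxv⟩
    refine ⟨g ^ j * x * (g ^ j)⁻¹, ⟨mul_mem (mul_mem hgj hx) (inv_mem hgj), ?_⟩, by group⟩
    rw [zpow_neg] at hxv
    rw [Perm.mul_apply, Perm.mul_apply, hxv]
    exact (g ^ j).apply_symm_apply v

theorem biInter_conjStab_sub (hg : g ∈ G) {a b : ℤ} (hab : a ≤ b) (c : ℤ) :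
    ⋂ j ∈ Set.Icc a b, ConjStab G v g (j - c) = arcStab G v g (c - b) (c - a) := by
  ext x
  simp only [Set.mem_iInter, Set.mem_Icc, mem_conjStab hg, SetLike.mem_coe, mem_arcStab]
  constructor
  · intro h
    refine ⟨(h a ⟨le_rfl, hab⟩).1, fun t ht ht' => ?_⟩
    simpa using (h (c - t) ⟨by omega, by omega⟩).2
  · rintro ⟨hx, hfix⟩ j hj
    exact ⟨hx, hfix _ (by omega) (by omega)⟩

end ConjStab

theorem stmt2_general {V : Type*} (r : V → V → Prop)
    (G : Subgroup (Equiv.Perm V))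
    (hGaut : ∀ g ∈ G, ∀ a b, r a b ↔ r (g a) (g b))
    (harc : ArcTrans r G 1)
    (s : ℕ) (hs : 2 ≤ s)
    (v : V) (g : Equiv.Perm V) (hg : g ∈ G) (hvg : r v (g v)) :
    ArcTrans r G s ↔
      ∀ i : ℕ, 1 ≤ i → i ≤ s - 1 →
        (⋂ j ∈ Set.Icc (0 : ℤ) ((i : ℤ) - 1), ConjStab G v g j) =
          (⋂ j ∈ Set.Icc (0 : ℤ) (i : ℤ), ConjStab G v g (j - 1)) *
            (⋂ j ∈ Set.Icc (0 : ℤ) (i : ℤ), ConjStab G v g j) := by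
  have hdown (n : ℕ) (hn : 1 ≤ n) : ArcTrans r G (n + 1) → ArcTrans r G n :=
    ArcTrans.of_succ (fun _ _ => exists_rel_of_rel hGaut harc hg hvg) hn
  refine iff_forall_of_succ_iff harc hdown (fun i hi hi' => ?_) (by omega)
  obtain ⟨m, rfl⟩ : ∃ m, i = m + 1 := ⟨i - 1, by omega⟩
  have hbiInter (a b : ℤ) (hab : a ≤ b) : ⋂ j ∈ Set.Icc a b, ConjStab G v g j =
      arcStab G v g (-b) (-a) := by
    simpa using biInter_conjStab_sub (v := v) hg hab 0
  rw [arcTrans_add_two_iff hGaut hg hvg hi', hbiInter _ _ (by omega),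
    biInter_conjStab_sub hg (by omega), hbiInter _ _ (by omega)]
  push_cast
  simp

/-- Let `Γ` be a `G`-arc-transitive digraph, `s ≥ 2`, `v` a vertex and
`g ∈ G` with `v → v^g`. Then `Γ` is `(G,s)`-arc-transitive iff for each `i ∈ {1,…,s−1}`,
`⋂_{j=0}^{i−1} g⁻ʲG_v gʲ = (⋂_{j=0}^{i} g^{−(j−1)}G_v g^{j−1}) ⬝ (⋂_{j=0}^{i} g⁻ʲG_v gʲ)`. -/
theorem stmt2 {V : Type*} [Finite V] (r : V → V → Prop)
    (hirr : ∀ a, ¬ r a a) (hasym : ∀ a b, r a b → ¬ r b a)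
    (G : Subgroup (Equiv.Perm V))
    (hGaut : ∀ g ∈ G, ∀ a b, r a b ↔ r (g a) (g b))
    (harc : ArcTrans r G 1)
    (s : ℕ) (hs : 2 ≤ s)
    (v : V) (g : Equiv.Perm V) (hg : g ∈ G) (hvg : r v (g v)) :
    ArcTrans r G s ↔
      ∀ i : ℕ, 1 ≤ i → i ≤ s - 1 →
        (⋂ j ∈ Set.Icc (0 : ℤ) ((i : ℤ) - 1), ConjStab G v g j) =
          (⋂ j ∈ Set.Icc (0 : ℤ) (i : ℤ), ConjStab G v g (j - 1)) *
            (⋂ j ∈ Set.Icc (0 : ℤ) (i : ℤ), ConjStab G v g j) :=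
  stmt2_general r G hGaut harc s hs v g hg hvg
end

section
/- Let Γ be a (G,s)-arc-transitive digraph with s ≥ 2, where G is a group of automorphisms of Γ, let M be a normal subgroup of G that is transitive on the vertices of Γ, and let v_1 → v_2 → ⋯ → v_s be an (s−1)-arc of Γ. Then G = M · G_{v_1⋯v_i} for each i ∈ {1,…,s}, where G_{v_1⋯v_i} denotes the pointwise stabilizer of v_1,…,v_i in G. -/
open scoped Pointwise

/-
By a Frattini argument, `G = M G_{v_1⋯v_i}` amounts to `M` being transitive on
`(i-1)`-arcs, which is proved by induction on the arc length. Given `(k+1)`-arcs `a` and `b`,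
choose `m, m' ∈ M` moving `a_0⋯a_k` and `b_0⋯b_k` onto `a_1⋯a_{k+1}`. Then `a` extended by
`m a_{k+1}` and `a` extended by `m' b_{k+1}` are `(k+2)`-arcs, so some `g ∈ G` fixes `a` and
maps `m a_{k+1}` to `m' b_{k+1}`; the element `m'⁻¹ (g m g⁻¹)` of `M` then maps `a` onto `b`.
-/

section ArcTransitivity

variable {V : Type*} {r : V → V → Prop}

def arcSnoc (w : ℕ → V) (n : ℕ) (b : V) : ℕ → V :=
  fun j => if j ≤ n then w j else b

lemma arcSnoc_of_le {w : ℕ → V} {n j : ℕ} {b : V} (h : j ≤ n) : arcSnoc w n b j = w j :=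
  if_pos h

lemma arcSnoc_succ (w : ℕ → V) (n : ℕ) (b : V) : arcSnoc w n b (n + 1) = b :=
  if_neg (by omega)

namespace IsSArc

variable {s : ℕ} {w : ℕ → V}

lemma mono_s8 (hw : IsSArc r s w) {i : ℕ} (h : i ≤ s) : IsSArc r i w :=
  fun j hj => hw j (by omega)

lemma shift (hw : IsSArc r (s + 1) w) : IsSArc r s (fun j => w (j + 1)) :=
  fun j hj => hw (j + 1) (by omega)

lemma map (hw : IsSArc r s w) {g : V → V} (hg : ∀ a b, r a b ↔ r (g a) (g b)) :
    IsSArc r s (g ∘ w) :=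
  fun j hj => (hg _ _).mp (hw j hj)

lemma snoc (hw : IsSArc r s w) {b : V} (hb : r (w s) b) : IsSArc r (s + 1) (arcSnoc w s b) := by
  intro j hj
  rcases Nat.lt_or_ge j s with h | h
  · rw [arcSnoc_of_le h.le, arcSnoc_of_le h]
    exact hw j h
  · obtain rfl : j = s := by omega
    rwa [arcSnoc_succ, arcSnoc_of_le le_rfl]

lemma exists_extension (hw : IsSArc r s w) (hout : ∀ a, ∃ b, r a b) (k : ℕ) :
    ∃ w' : ℕ → V, IsSArc r (s + k) w' ∧ ∀ j ≤ s, w' j = w j := by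
  induction k with
  | zero => exact ⟨w, hw, fun _ _ => rfl⟩
  | succ k ih =>
    obtain ⟨w', hw', hw'w⟩ := ih
    obtain ⟨b, hb⟩ := hout (w' (s + k))
    exact ⟨arcSnoc w' (s + k) b, hw'.snoc hb,
      fun j hj => (arcSnoc_of_le (by omega)).trans (hw'w j hj)⟩

end IsSArc

namespace ArcTrans

variable {G M : Subgroup (Equiv.Perm V)}

lemma zero_iff : ArcTrans r G 0 ↔ ∀ a b : V, ∃ g ∈ G, g a = b := by
  refine ⟨fun h a b => ?_, fun h v w _ _ => ?_⟩
  · obtain ⟨g, hg, hgab⟩ := h (fun _ => a) (fun _ => b) (fun _ h => absurd h (by omega))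
      (fun _ h => absurd h (by omega))
    exact ⟨g, hg, hgab 0 le_rfl⟩
  · obtain ⟨g, hg, hgvw⟩ := h (v 0) (w 0)
    exact ⟨g, hg, fun i hi => by rwa [Nat.le_zero.mp hi]⟩

/-- Once there is an arc at all, vertex-transitivity gives every vertex an out-neighbour,
so `i`-arcs extend to `s`-arcs. -/
lemma mono_s8 (hG0 : ArcTrans r G 0) (hGaut : ∀ g ∈ G, ∀ a b, r a b ↔ r (g a) (g b))
    {s : ℕ} (hGs : ArcTrans r G s) {i : ℕ} (hi : i ≤ s) : ArcTrans r G i := by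
  rcases Nat.eq_zero_or_pos i with rfl | hi0
  · exact hG0
  intro a b ha hb
  have hout : ∀ c, ∃ d, r c d := fun c => by
    obtain ⟨g, hg, hgc⟩ := zero_iff.mp hG0 (a 0) c
    exact ⟨g (a 1), hgc ▸ (hGaut g hg _ _).mp (ha 0 hi0)⟩
  obtain ⟨a', ha', ha'a⟩ := ha.exists_extension hout (s - i)
  obtain ⟨b', hb', hb'b⟩ := hb.exists_extension hout (s - i)
  rw [Nat.add_sub_cancel' hi] at ha' hb'
  obtain ⟨g, hg, hgab⟩ := hGs a' b' ha' hb'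
  exact ⟨g, hg, fun j hj => by rw [← ha'a j hj, ← hb'b j hj, hgab j (hj.trans hi)]⟩

lemma succ_of_normal (hGaut : ∀ g ∈ G, ∀ a b, r a b ↔ r (g a) (g b)) (hMG : M ≤ G)
    (hMnorm : ∀ g ∈ G, ∀ n ∈ M, g * n * g⁻¹ ∈ M) {k : ℕ}
    (hM : ArcTrans r M k) (hG : ArcTrans r G (k + 2)) : ArcTrans r M (k + 1) := by
  intro a b ha hb
  obtain ⟨m, hm, hma⟩ := hM a (fun j => a (j + 1)) (ha.mono_s8 k.le_succ) ha.shift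
  obtain ⟨m', hm', hmb⟩ := hM b (fun j => a (j + 1)) (hb.mono_s8 k.le_succ) ha.shift
  have hc : IsSArc r (k + 2) (arcSnoc a (k + 1) (m (a (k + 1)))) :=
    ha.snoc (by
      simpa only [hma k le_rfl] using (hGaut m (hMG hm) _ _).mp (ha k (by omega)))
  have hd : IsSArc r (k + 2) (arcSnoc a (k + 1) (m' (b (k + 1)))) :=
    ha.snoc (by
      simpa only [hmb k le_rfl] using (hGaut m' (hMG hm') _ _).mp (hb k (by omega)))
  obtain ⟨g, hg, hgcd⟩ := hG _ _ hc hd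
  have hfix : ∀ j ≤ k + 1, g (a j) = a j := fun j hj => by
    simpa only [arcSnoc_of_le hj] using hgcd j (by omega)
  have hgm : ∀ j ≤ k + 1, g (m (a j)) = m' (b j) := fun j hj => by
    rcases hj.lt_or_eq with hj | rfl
    · rw [hma j (by omega), hmb j (by omega)]
      exact hfix (j + 1) (by omega)
    · simpa only [arcSnoc_succ] using hgcd (k + 2) le_rfl
  refine ⟨m'⁻¹ * (g * m * g⁻¹), M.mul_mem (M.inv_mem hm') (hMnorm g hg m hm),
    fun j hj => ?_⟩
  have hginv : g⁻¹ (a j) = a j := by rw [Equiv.Perm.inv_eq_iff_eq, hfix j hj]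
  rw [Equiv.Perm.mul_apply, Equiv.Perm.mul_apply, Equiv.Perm.mul_apply, hginv, hgm j hj]
  exact m'.symm_apply_apply _

lemma of_normal (hGaut : ∀ g ∈ G, ∀ a b, r a b ↔ r (g a) (g b)) (hMG : M ≤ G)
    (hMnorm : ∀ g ∈ G, ∀ n ∈ M, g * n * g⁻¹ ∈ M) (hM0 : ArcTrans r M 0)
    {s : ℕ} (hGs : ArcTrans r G s) : ∀ k, k + 1 ≤ s → ArcTrans r M k := by
  have hG0 : ArcTrans r G 0 := fun v w hv hw => by
    obtain ⟨m, hm, hmvw⟩ := hM0 v w hv hw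
    exact ⟨m, hMG hm, hmvw⟩
  intro k hk
  induction k with
  | zero => exact hM0
  | succ k ih =>
    exact succ_of_normal hGaut hMG hMnorm (ih (by omega)) (hG0.mono_s8 hGaut hGs (by omega))

lemma mul_stabilizer_eq (hGaut : ∀ g ∈ G, ∀ a b, r a b ↔ r (g a) (g b)) (hMG : M ≤ G)
    {k : ℕ} (hM : ArcTrans r M k) {w : ℕ → V} (hw : IsSArc r k w) :
    (M : Set (Equiv.Perm V)) * {x | x ∈ G ∧ ∀ j ≤ k, x (w j) = w j} = G := by
  refine subset_antisymm ?_ fun g hg => ?_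
  · rintro _ ⟨n, hn, x, hx, rfl⟩
    exact G.mul_mem (hMG hn) hx.1
  · obtain ⟨m, hm, hmw⟩ := hM (g ∘ w) w (hw.map (hGaut g hg)) hw
    exact ⟨m⁻¹, M.inv_mem hm, m * g, ⟨G.mul_mem (hMG hm) hg, hmw⟩, by group⟩

end ArcTrans

end ArcTransitivity

theorem stmt8_general {V : Type*} (r : V → V → Prop)
    (G M : Subgroup (Equiv.Perm V))
    (hGaut : ∀ g ∈ G, ∀ a b, r a b ↔ r (g a) (g b))
    (s : ℕ)
    (hGs : ArcTrans r G s)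
    (hMG : M ≤ G)
    (hMnorm : ∀ g ∈ G, ∀ n ∈ M, g * n * g⁻¹ ∈ M)
    (hMtrans : ∀ a b : V, ∃ n ∈ M, n a = b)
    (v : ℕ → V) (hv : ∀ i, 1 ≤ i → i < s → r (v i) (v (i + 1))) :
    ∀ i, 1 ≤ i → i ≤ s →
      (M : Set (Equiv.Perm V)) *
          {x : Equiv.Perm V | x ∈ G ∧ ∀ j, 1 ≤ j → j ≤ i → x (v j) = v j} =
        (G : Set (Equiv.Perm V)) := by
  intro i hi his
  have hM : ArcTrans r M (i - 1) :=
    ArcTrans.of_normal hGaut hMG hMnorm (ArcTrans.zero_iff.mpr hMtrans) hGs _ (by omega)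
  have hw : IsSArc r (i - 1) (fun j => v (j + 1)) := fun j hj => hv (j + 1) (by omega) (by omega)
  have hstab : {x : Equiv.Perm V | x ∈ G ∧ ∀ j, 1 ≤ j → j ≤ i → x (v j) = v j} =
      {x | x ∈ G ∧ ∀ j ≤ i - 1, x (v (j + 1)) = v (j + 1)} := by
    ext x
    refine and_congr_right fun _ => ⟨fun h j hj => h (j + 1) (by omega) (by omega),
      fun h j hj1 hji => ?_⟩
    simpa only [Nat.sub_add_cancel hj1] using h (j - 1) (by omega)
  rw [hstab, hM.mul_stabilizer_eq hGaut hMG hw]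

/-- Let `Γ` be a `(G,s)`-arc-transitive digraph with `s ≥ 2`, let `M` be
a vertex-transitive normal subgroup of `G`, and let `v 1 → v 2 → ⋯ → v s` be an
`(s−1)`-arc of `Γ`.  Then `G = M ⬝ G_{v_1⋯v_i}` for each `i ∈ {1,…,s}`. -/
theorem stmt8 {V : Type*} [Finite V] (r : V → V → Prop)
    (hirr : ∀ a, ¬ r a a) (hasym : ∀ a b, r a b → ¬ r b a)
    (G M : Subgroup (Equiv.Perm V))
    (hGaut : ∀ g ∈ G, ∀ a b, r a b ↔ r (g a) (g b))
    (s : ℕ) (hs : 2 ≤ s)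
    (hGs : ArcTrans r G s)
    (hMG : M ≤ G)
    (hMnorm : ∀ g ∈ G, ∀ n ∈ M, g * n * g⁻¹ ∈ M)
    (hMtrans : ∀ a b : V, ∃ n ∈ M, n a = b)
    (v : ℕ → V) (hv : ∀ i, 1 ≤ i → i < s → r (v i) (v (i + 1))) :
    ∀ i, 1 ≤ i → i ≤ s →
      (M : Set (Equiv.Perm V)) *
          {x : Equiv.Perm V | x ∈ G ∧ ∀ j, 1 ≤ j → j ≤ i → x (v j) = v j} =
        (G : Set (Equiv.Perm V)) :=
  stmt8_general r G M hGaut s hGs hMG hMnorm hMtrans v hv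
end

section
/- Let Γ be a (G,s)-arc-transitive digraph with s ≥ 2, where G is a group of automorphisms of Γ, and let M be a normal subgroup of G that is transitive on the vertices of Γ. Then Γ is (M, s−1)-arc-transitive. -/
/-- Let `Γ` be a `(G,s)`-arc-transitive digraph with `s ≥ 2`, and let
`M` be a vertex-transitive normal subgroup of `G`.  Then `Γ` is `(M, s−1)`-arc-transitive. -/
theorem stmt9 {V : Type*} [Finite V] (r : V → V → Prop)
    (hirr : ∀ a, ¬ r a a) (hasym : ∀ a b, r a b → ¬ r b a)
    (G M : Subgroup (Equiv.Perm V))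
    (hGaut : ∀ g ∈ G, ∀ a b, r a b ↔ r (g a) (g b))
    (s : ℕ) (hs : 2 ≤ s)
    (hGs : ArcTrans r G s)
    (hMG : M ≤ G)
    (hMnorm : ∀ g ∈ G, ∀ n ∈ M, g * n * g⁻¹ ∈ M)
    (hMtrans : ∀ a b : V, ∃ n ∈ M, n a = b) :
    ArcTrans r M (s - 1) := by
  -- Key lemma: M contains a "shift" of every s-arc.
  have shiftLemma : ∀ u : ℕ → V, IsSArc r s u →
      ∃ m ∈ M, ∀ i < s, m (u i) = u (i + 1) := by
    intro u hu
    obtain ⟨n, hnM, hn⟩ := hMtrans (u 0) (u 1)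
    have hnG : n ∈ G := hMG hnM
    set P : ℕ → V := fun i => (n ^ i) (u 0) with hP
    have key : ∀ j : ℕ, P (j + 1) = n (P j) := by
      intro j
      simp [hP, pow_succ', Equiv.Perm.mul_apply]
    have hedge : ∀ i : ℕ, r (P i) (P (i + 1)) := by
      intro i
      induction i with
      | zero =>
        have h0 : r (u 0) (u 1) := hu 0 (by omega)
        have hP0 : P 0 = u 0 := by simp [hP]
        have hP1 : P 1 = u 1 := by
          rw [key 0, hP0, hn]
        rw [hP0, hP1]; exact h0
      | succ k ih =>
        rw [key k, key (k + 1)]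
        exact (hGaut n hnG (P k) (P (k + 1))).mp ih
    have hPArc : IsSArc r s P := fun i _ => hedge i
    obtain ⟨g, hgG, hg⟩ := hGs P u hPArc hu
    refine ⟨g * n * g⁻¹, hMnorm g hgG n hnM, ?_⟩
    intro i hi
    have h1 : g⁻¹ (u i) = P i := by
      rw [← hg i (le_of_lt hi)]
      simp
    simp only [Equiv.Perm.mul_apply]
    rw [h1, ← key i]
    exact hg (i + 1) (by omega)
  -- Set t := s - 1.
  set t := s - 1 with ht
  have hst : s = t + 1 := by omega
  have ht1 : 1 ≤ t := by omega
  intro v w hv hw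
  obtain ⟨n₁, hn₁M, hn₁⟩ := hMtrans (v t) (w 0)
  -- The concatenated path of length 2t.
  set W : ℕ → V := fun i => if i < t then n₁ (v i) else w (i - t) with hW
  have hWt : ∀ i ≤ t, W i = n₁ (v i) := by
    intro i hi
    by_cases h2 : i < t
    · simp [hW, h2]
    · have hit : i = t := by omega
      simp [hW, hit, ← hn₁]
  have hWw : ∀ i, t ≤ i → W i = w (i - t) := by
    intro i hi
    by_cases h2 : i < t
    · omega
    · simp [hW, h2]
  have hWpath : ∀ i < 2 * t, r (W i) (W (i + 1)) := by
    intro i hi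
    by_cases h1 : i + 1 ≤ t
    · have e : r (v i) (v (i + 1)) := hv i (by omega)
      rw [hWt i (by omega), hWt (i + 1) h1]
      exact (hGaut n₁ (hMG hn₁M) _ _).mp e
    · rw [hWw i (by omega), hWw (i + 1) (by omega)]
      have e : r (w (i - t)) (w (i - t + 1)) := hw (i - t) (by omega)
      have h2 : i - t + 1 = i + 1 - t := by omega
      rwa [h2] at e
  -- Chain shifts: move the window k steps along W.
  have chain : ∀ k, k ≤ t → ∃ m ∈ M, ∀ i ≤ t, m (W i) = W (i + k) := by
    intro k
    induction k with
    | zero => exact fun _ => ⟨1, one_mem M, by simp⟩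
    | succ k ih =>
      intro hk
      obtain ⟨m, hmM, hm⟩ := ih (by omega)
      have harc : IsSArc r s fun j => W (j + k) := by
        intro j hj
        have h := hWpath (j + k) (by omega)
        simpa [show j + k + 1 = j + 1 + k by omega] using h
      obtain ⟨m', hm'M, hm'⟩ := shiftLemma _ harc
      refine ⟨m' * m, M.mul_mem hm'M hmM, ?_⟩
      intro i hi
      simp only [Equiv.Perm.mul_apply]
      rw [hm i hi]
      have h := hm' i (by omega)
      rw [show i + (k + 1) = i + 1 + k by omega]
      simpa using h
  obtain ⟨m, hmM, hm⟩ := chain t le_rfl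
  refine ⟨m * n₁, M.mul_mem hmM hn₁M, ?_⟩
  intro i hi
  simp only [Equiv.Perm.mul_apply]
  rw [← hWt i hi, hm i hi, hWw (i + t) (by omega)]
  congr 1
  omega
end

section
/- Let Γ be a (G,2)-arc-transitive digraph that has at least one arc, where G is a group of automorphisms of Γ, and suppose that G has a normal subgroup N that acts regularly on the vertex set of Γ. Then Γ is 1-regular: every vertex has exactly one out-neighbour and exactly one in-neighbour (so Γ is a disjoint union of directed cycles, and is a directed cycle when it is connected). -/
/-- Let `Γ` be a `(G,2)`-arc-transitive digraph with at least one arc.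
If `G` has a normal subgroup `N` acting regularly on the vertices, then `Γ` is
`1`-regular: every vertex has exactly one out-neighbour and exactly one in-neighbour. -/
theorem stmt10 {V : Type*} [Finite V] (r : V → V → Prop)
    (hirr : ∀ a, ¬ r a a) (hasym : ∀ a b, r a b → ¬ r b a)
    (G N : Subgroup (Equiv.Perm V))
    (hGaut : ∀ g ∈ G, ∀ a b, r a b ↔ r (g a) (g b))
    (hG2 : ArcTrans r G 2)
    (harc : ∃ a b : V, r a b)
    (hNG : N ≤ G)
    (hNnorm : ∀ g ∈ G, ∀ n ∈ N, g * n * g⁻¹ ∈ N)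
    (hNtrans : ∀ a b : V, ∃ n ∈ N, n a = b)
    (hNreg : ∀ n ∈ N, ∀ a : V, n a = a → n = 1) :
    ∀ a : V, (∃! b, r a b) ∧ (∃! c, r c a) := by
  classical
  obtain ⟨a0, b0, hab0⟩ := harc
  -- every vertex has an out-neighbour
  have hout : ∀ x : V, ∃ y, r x y := by
    intro x
    obtain ⟨n, hnN, hna⟩ := hNtrans a0 x
    exact ⟨n b0, hna ▸ (hGaut n (hNG hnN) a0 b0).mp hab0⟩
  -- every vertex has an in-neighbour
  have hin : ∀ x : V, ∃ y, r y x := by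
    intro x
    obtain ⟨n, hnN, hnb⟩ := hNtrans b0 x
    exact ⟨n a0, hnb ▸ (hGaut n (hNG hnN) a0 b0).mp hab0⟩
  -- uniqueness of out-neighbours
  have huniq : ∀ a b b' : V, r a b → r a b' → b = b' := by
    intro a b b' hb hb'
    obtain ⟨nb, hnbN, hnba⟩ := hNtrans a b
    have hrb : r b (nb b) := by
      have := (hGaut nb (hNG hnbN) a b).mp hb
      rwa [hnba] at this
    have hrb' : r b (nb b') := by
      have := (hGaut nb (hNG hnbN) a b').mp hb'
      rwa [hnba] at this
    set v : ℕ → V := fun i => if i = 0 then a else if i = 1 then b else nb b with hv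
    set w : ℕ → V := fun i => if i = 0 then a else if i = 1 then b else nb b' with hw
    have hva : IsSArc r 2 v := by
      intro i hi
      interval_cases i <;> simpa [hv] using (by assumption)
    have hwa : IsSArc r 2 w := by
      intro i hi
      interval_cases i <;> simpa [hw] using (by assumption)
    obtain ⟨g, hgG, hg⟩ := hG2 v w hva hwa
    have hg0 : g a = a := by simpa [hv, hw] using hg 0 (by norm_num)
    have hg1 : g b = b := by simpa [hv, hw] using hg 1 (by norm_num)
    have hg2 : g (nb b) = nb b' := by simpa [hv, hw] using hg 2 (le_refl 2)
    -- g commutes with nb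
    have hmem : (g * nb * g⁻¹) * nb⁻¹ ∈ N :=
      mul_mem (hNnorm g hgG nb hnbN) (inv_mem hnbN)
    have hfix : ((g * nb * g⁻¹) * nb⁻¹) b = b := by
      have hinvb : nb⁻¹ b = a := by
        rw [← hnba]; simp
      have hginv : g⁻¹ a = a := by
        simpa using (congrArg (fun x => g⁻¹ x) hg0).symm
      simp only [Equiv.Perm.mul_apply]
      rw [hinvb, hginv, hnba, hg1]
    have hone : (g * nb * g⁻¹) * nb⁻¹ = 1 := hNreg _ hmem b hfix
    have hcomm : g * nb = nb * g := by
      have h1 : g * nb * g⁻¹ = nb := by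
        rwa [mul_inv_eq_one] at hone
      exact mul_inv_eq_iff_eq_mul.mp h1
    have : nb b' = nb b := by
      calc nb b' = g (nb b) := hg2.symm
        _ = (g * nb) b := rfl
        _ = (nb * g) b := by rw [hcomm]
        _ = nb (g b) := rfl
        _ = nb b := by rw [hg1]
    exact (nb.injective this).symm
  -- out-neighbour function
  have hf : ∀ x : V, ∃ y, r x y := hout
  let f : V → V := fun x => (hf x).choose
  have hfr : ∀ x, r x (f x) := fun x => (hf x).choose_spec
  have hfsurj : Function.Surjective f := by
    intro y
    obtain ⟨x, hx⟩ := hin y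
    exact ⟨x, (huniq x (f x) y (hfr x) hx).symm ▸ rfl⟩
  have hfinj : Function.Injective f := Finite.injective_iff_surjective.mpr hfsurj
  intro a
  refine ⟨⟨f a, hfr a, fun y hy => (huniq a (f a) y (hfr a) hy).symm⟩, ?_⟩
  obtain ⟨c, hc⟩ := hin a
  refine ⟨c, hc, fun y hy => ?_⟩
  have h1 : f y = a := huniq y (f y) a (hfr y) hy
  have h2 : f c = a := huniq c (f c) a (hfr c) hc
  exact hfinj (h1.trans h2.symm)
end

section
/- Let A be a finite group with a normal subgroup T such that T is a nonabelian simple group and the quotient A/T is solvable. Let L be a finite nonabelian simple group and n a positive integer, and suppose that A has a subgroup isomorphic to the direct power L^n with |T| ≤ |L|^n. Then n = 1 and L ≅ T. -/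
/-- Let `A` be a finite group with a nonabelian simple normal subgroup
`T` such that `A/T` is solvable.  If `L` is a finite nonabelian simple group, `n ≥ 1`,
`A` has a subgroup isomorphic to `Lⁿ` (i.e. there is an injective homomorphism
`Lⁿ → A`), and `|T| ≤ |L|ⁿ`, then `n = 1` and `L ≅ T`. -/
theorem stmt11 {A : Type*} [Group A] [Finite A] (T : Subgroup A) [T.Normal]
    (hTsimple : IsSimpleGroup T) (hTnonab : ∃ a b : T, a * b ≠ b * a)
    (hsolv : IsSolvable (A ⧸ T))
    {L : Type*} [Group L] [Finite L]
    (hLsimple : IsSimpleGroup L) (hLnonab : ∃ a b : L, a * b ≠ b * a)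
    (n : ℕ) (hn : 1 ≤ n)
    (f : (Fin n → L) →* A) (hf : Function.Injective f)
    (hcard : Nat.card T ≤ Nat.card L ^ n) :
    n = 1 ∧ Nonempty (L ≃* T) := by
  classical
  -- L is perfect
  have hLperf : commutator L = ⊤ := by
    rcases (Subgroup.commutator_normal (⊤ : Subgroup L) (⊤ : Subgroup L)).eq_bot_or_eq_top with h | h
    · exfalso
      obtain ⟨a, b, hab⟩ := hLnonab
      rw [Subgroup.commutator_eq_bot_iff_le_centralizer] at h
      exact hab (h (Subgroup.mem_top a) b (Subgroup.mem_top b)).symm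
    · exact h
  -- the direct power Lⁿ is perfect
  have hperf : commutator (Fin n → L) = ⊤ := by
    rw [eq_top_iff, ← Subgroup.pi_top Set.univ]
    rw [Subgroup.pi_le_iff]
    intro i
    calc Subgroup.map (MonoidHom.mulSingle (fun _ : Fin n => L) i) ⊤
        = Subgroup.map (MonoidHom.mulSingle (fun _ : Fin n => L) i)
            ⁅(⊤ : Subgroup L), (⊤ : Subgroup L)⁆ := by rw [← commutator_def, hLperf]
      _ = ⁅Subgroup.map (MonoidHom.mulSingle (fun _ : Fin n => L) i) ⊤,
            Subgroup.map (MonoidHom.mulSingle (fun _ : Fin n => L) i) ⊤⁆ :=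
          Subgroup.map_commutator _ _ _
      _ ≤ ⁅(⊤ : Subgroup (Fin n → L)), (⊤ : Subgroup (Fin n → L))⁆ :=
          Subgroup.commutator_mono le_top le_top
  -- hence every derived series term of Lⁿ is ⊤
  have hder : ∀ k, derivedSeries (Fin n → L) k = ⊤ := by
    intro k
    induction k with
    | zero => exact derivedSeries_zero _
    | succ k ih => rw [derivedSeries_succ, ih, ← commutator_def, hperf]
  -- the composed map to the solvable quotient A/T is trivial, so f lands in T
  have hfT : ∀ x, f x ∈ T := by
    obtain ⟨m, hm⟩ := hsolv.solvable
    intro x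
    have hx : ((QuotientGroup.mk' T).comp f) x = 1 := by
      have hmem : x ∈ derivedSeries (Fin n → L) m := (hder m).symm ▸ Subgroup.mem_top x
      have := map_derivedSeries_le_derivedSeries ((QuotientGroup.mk' T).comp f) m
        (Subgroup.mem_map_of_mem _ hmem)
      rw [hm] at this
      exact this
    rwa [MonoidHom.comp_apply, QuotientGroup.mk'_apply, QuotientGroup.eq_one_iff] at hx
  -- restrict f to a hom into T
  set f' : (Fin n → L) →* T := f.codRestrict T hfT with hf'
  have hf'inj : Function.Injective f' := fun a b hab => hf (congrArg Subtype.val hab)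
  have hcard' : Nat.card T ≤ Nat.card (Fin n → L) := by
    rwa [Nat.card_fun, Nat.card_eq_fintype_card (α := Fin n), Fintype.card_fin]
  have hbij : Function.Bijective f' :=
    (Nat.bijective_iff_injective_and_card f').mpr
      ⟨hf'inj, le_antisymm (Nat.card_le_card_of_injective f' hf'inj) hcard'⟩
  let e : (Fin n → L) ≃* T := MulEquiv.ofBijective f' hbij
  -- transfer simplicity to Lⁿ
  have hLnt : Nontrivial L := hLsimple.toNontrivial
  have hne : Nonempty (Fin n) := ⟨⟨0, hn⟩⟩
  have hsimple : IsSimpleGroup (Fin n → L) :=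
    IsSimpleGroup.isSimpleGroup_of_surjective e.symm.toMonoidHom e.symm.surjective
  -- n = 1
  have hn1 : n = 1 := by
    by_contra hne1
    have h2 : 2 ≤ n := lt_of_le_of_ne hn (Ne.symm hne1)
    set i0 : Fin n := ⟨0, by omega⟩
    set i1 : Fin n := ⟨1, by omega⟩
    have hi01 : i1 ≠ i0 := by simp [i0, i1, Fin.ext_iff]
    obtain ⟨x, hx⟩ := exists_ne (1 : L)
    set N : Subgroup (Fin n → L) := (Pi.evalMonoidHom (fun _ => L) i0).ker
    have hNnormal : N.Normal := MonoidHom.normal_ker _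
    rcases hNnormal.eq_bot_or_eq_top with h | h
    · have hmem : Pi.mulSingle i1 x ∈ N := by
        simp only [N, MonoidHom.mem_ker, Pi.evalMonoidHom_apply]
        exact Pi.mulSingle_eq_of_ne hi01.symm x
      rw [h, Subgroup.mem_bot] at hmem
      exact hx (by simpa using congrFun hmem i1)
    · have hmem : Pi.mulSingle i0 x ∈ N := h ▸ Subgroup.mem_top _
      simp only [N, MonoidHom.mem_ker, Pi.evalMonoidHom_apply, Pi.mulSingle_eq_same] at hmem
      exact hx hmem
  subst hn1
  exact ⟨rfl, ⟨((MulEquiv.piUnique (fun _ : Fin 1 => L)).symm.trans e)⟩⟩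
end

section
/- Let T be a finite nonabelian simple group and let A be a finite group having a normal subgroup isomorphic to T whose centralizer in A is trivial and such that A/T is solvable (i.e., A is almost simple with socle T, where A/T is solvable by the Schreier conjecture). Let S be a primitive permutation group on a finite set Ω with |Ω| = |T|. Then S is not isomorphic to any subgroup of A. -/
/-!
View `S` inside `A` and let `N := S ∩ T`, a normal subgroup of `S`.

If `N = 1`, then `S` embeds in the solvable group `A/T`. A solvable primitive group has
prime-power degree, because a nontrivial abelian characteristic `p`-subgroup is transitive and
hence regular; so `|T| = |Ω|` would be a prime power.

Otherwise `N` is transitive, being normal in a primitive group, and `|N| ≤ |T| = |Ω|` forces `N` to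
be regular with `N ≅ T`. A point stabiliser `H` is then a complement to `N`; it is solvable (it
embeds in `A/T`), acts faithfully on `N` (as `C_A(T) = 1`), and, being maximal, normalises no
proper nontrivial subgroup of `N`. This is impossible. Let `Q ≠ 1` be a normal `q`-subgroup of
`H`. If `C_N(Q) ≠ 1` it is such a subgroup. Otherwise `q ∤ |N|`, since a `q`-group acting on `N`
fixes a non-identity element when `q ∣ |N|`; then for every prime `r` there is exactly one
`Q`-invariant Sylow `r`-subgroup of `N`, and `H` normalises it.
-/

open Subgroup ConjAct MulAction
open scoped Pointwise commutatorElement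

section

variable {G : Type*} [Group G]

theorem Subgroup.relIndex_normal_sup (N H : Subgroup G) [N.Normal] [N.FiniteIndex] :
    H.relIndex (N ⊔ H) = H.relIndex N := by
  have key := relIndex_inf_mul_relIndex H N (N ⊔ H)
  rw [inf_of_le_left le_sup_left, relIndex_sup_left,
    ← relIndex_mul_relIndex _ _ _ inf_le_left le_sup_right, inf_relIndex_left, mul_comm] at key
  have : N.IsFiniteRelIndex H := isFiniteRelIndex_of_finiteIndex
  exact (Nat.eq_of_mul_eq_mul_left (Nat.pos_of_ne_zero relIndex_ne_zero) key).symm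

theorem Subgroup.relIndex_dvd_card_of_le_sup {N H K : Subgroup G} [N.Normal] [N.FiniteIndex]
    (hHK : H ≤ K) (hK : K ≤ N ⊔ H) : H.relIndex K ∣ Nat.card N := by
  calc H.relIndex K ∣ H.relIndex (N ⊔ H) := Dvd.intro _ (relIndex_mul_relIndex H K _ hHK hK)
    _ = H.relIndex N := relIndex_normal_sup N H
    _ ∣ Nat.card N := relIndex_dvd_card H N

theorem Subgroup.normalizer_le_normalizer_centralizer (Q : Subgroup G) :
    normalizer Q ≤ normalizer (centralizer (Q : Set G) : Set G) := by
  refine le_normalizer_iff.mpr fun g hg x hx => mem_centralizer_iff.mpr fun v hv => ?_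
  have hv' : g⁻¹ * v * g ∈ Q := by
    simpa using (mem_normalizer_iff.mp (inv_mem hg) v).mp hv
  have := mem_centralizer_iff.mp hx _ hv'
  calc v * (g * x * g⁻¹) = g * ((g⁻¹ * v * g) * x) * g⁻¹ := by group
    _ = g * (x * (g⁻¹ * v * g)) * g⁻¹ := by rw [this]
    _ = g * x * g⁻¹ * v := by group

theorem Subgroup.mem_centralizer_of_mem_normalizer {N Q : Subgroup G} [N.Normal]
    (hNQ : Disjoint N Q) {m : G} (hmN : m ∈ N) (hmQ : m ∈ normalizer Q) : m ∈ centralizer Q := by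
  refine mem_centralizer_iff.mpr fun v hv => commutatorElement_eq_one_iff_mul_comm.mp ?_
  refine disjoint_def.mp hNQ (mul_mem (‹N.Normal›.conj_mem m hmN v) (inv_mem hmN)) ?_
  rw [show ⁅v, m⁆ = v * (m * v⁻¹ * m⁻¹) by group]
  exact mul_mem hv ((mem_normalizer_iff.mp hmQ _).mp (inv_mem hv))

theorem Subgroup.eq_bot_or_le_of_isCoatom {N H P : Subgroup G} (hH : IsCoatom H)
    (hNH : N ⊓ H = ⊥) (hPN : P ≤ N) (hHP : H ≤ normalizer P) : P = ⊥ ∨ N ≤ P := by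
  rcases hH.le_iff.mp (le_sup_right : H ≤ P ⊔ H) with h | h
  · refine .inr fun n hn => ?_
    obtain ⟨x, hx, y, hy, rfl⟩ : n ∈ (P : Set G) * H := by
      rw [← coe_mul_of_right_le_normalizer_left P H hHP, h]
      trivial
    have hy1 : y = 1 := mem_bot.mp (hNH ▸ ⟨by simpa using mul_mem (inv_mem (hPN hx)) hn, hy⟩)
    simpa [hy1] using hx
  · exact .inl (eq_bot_iff.mpr (hNH ▸ le_inf hPN (h ▸ le_sup_left)))

theorem Subgroup.centralizer_eq_bot_of_map {A : Type*} [Group A] {f : G →* A}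
    (hf : Function.Injective f) {N : Subgroup G} (h : centralizer (N.map f : Set A) = ⊥) :
    centralizer (N : Set G) = ⊥ := by
  have := map_centralizer_le_centralizer_image (N : Set G) f
  rwa [← coe_map, h, le_bot_iff, map_eq_bot_iff_of_injective _ hf] at this

theorem isSolvable_of_inf_eq_bot {N H : Subgroup G} [N.Normal] [Group.IsSolvable (G ⧸ N)]
    (h : N ⊓ H = ⊥) : Group.IsSolvable H := by
  refine Group.isSolvable_of_isSolvable_injective (f := (QuotientGroup.mk' N).comp H.subtype)
    ((injective_iff_map_eq_one _).mpr fun x hx => Subtype.ext (mem_bot.mp (h ▸ ?_)))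
  exact ⟨(QuotientGroup.eq_one_iff _).mp hx, x.2⟩

theorem IsSimpleGroup.not_isPGroup [Finite G] [IsSimpleGroup G] (h : ∃ a b : G, a * b ≠ b * a)
    {p : ℕ} (hp : p.Prime) : ¬ IsPGroup p G := fun hG => by
  have := Fact.mk hp
  have := hG.isNilpotent
  obtain ⟨a, b, hab⟩ := h
  exact hab (IsSimpleGroup.comm_iff_isSolvable.mpr inferInstance a b)

theorem Group.IsSolvable.exists_characteristic_ne_bot_commutator_eq_bot [Group.IsSolvable G]
    [Nontrivial G] :
    ∃ M : Subgroup G, M.Characteristic ∧ M ≠ ⊥ ∧ ⁅M, M⁆ = ⊥ := by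
  classical
  have hex : ∃ n, derivedSeries G (n + 1) = ⊥ := by
    obtain ⟨n, hn⟩ := Group.IsSolvable.solvable (G := G)
    exact ⟨n, eq_bot_iff.mpr (hn ▸ derivedSeries_antitone G (Nat.le_succ n))⟩
  refine ⟨derivedSeries G (Nat.find hex), inferInstance, fun h => ?_, Nat.find_spec hex⟩
  rcases hk : Nat.find hex with _ | k
  · rw [hk, derivedSeries_zero] at h
    exact top_ne_bot h
  · exact Nat.find_min hex (hk ▸ Nat.lt_succ_self k) (hk ▸ h)

theorem Group.IsSolvable.exists_isPGroup_characteristic [Finite G] [Group.IsSolvable G]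
    [Nontrivial G] :
    ∃ (p : ℕ) (Q : Subgroup G), p.Prime ∧ Q.Characteristic ∧ Q ≠ ⊥ ∧ IsPGroup p Q ∧
      IsMulCommutative Q := by
  obtain ⟨M, hMchar, hM, hMM⟩ := exists_characteristic_ne_bot_commutator_eq_bot (G := G)
  have : IsMulCommutative M :=
    le_centralizer_iff_isMulCommutative.mp (commutator_eq_bot_iff_le_centralizer.mp hMM)
  obtain ⟨p, hp, hpM⟩ := Nat.exists_prime_and_dvd (card_eq_one.not.mpr hM)
  have := Fact.mk hp
  let P : Sylow p M := default
  have : (P : Subgroup M).Characteristic := P.characteristic_of_normal inferInstance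
  refine ⟨p, (P : Subgroup M).map M.subtype, hp, inferInstance, ?_, P.2.map _, inferInstance⟩
  rw [Ne, map_eq_bot_iff_of_injective _ M.subtype_injective]
  exact P.ne_bot_of_dvd_card hpM

theorem Sylow.toConjAct_smul_eq_smul {N : Subgroup G} [N.Normal] {r : ℕ} (P : Sylow r N) (n : N) :
    toConjAct (n : G) • P = n • P := by
  ext x
  simp only [Sylow.smul_def, Sylow.pointwise_smul_def, Subgroup.mem_pointwise_smul_iff_inv_smul_mem]
  rw [← map_inv, ← map_inv]
  rfl

theorem Sylow.map_subtype_smul {N : Subgroup G} [N.Normal] {r : ℕ} (P : Sylow r N) (c : ConjAct G) :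
    ((c • P : Sylow r N) : Subgroup N).map N.subtype = c • (P : Subgroup N).map N.subtype := by
  ext x
  simp only [Sylow.pointwise_smul_def, Subgroup.mem_map, Subgroup.mem_smul_pointwise_iff_exists]
  constructor
  · rintro ⟨_, ⟨y, hy, rfl⟩, rfl⟩
    exact ⟨y, ⟨y, hy, rfl⟩, rfl⟩
  · rintro ⟨_, ⟨y, hy, rfl⟩, rfl⟩
    exact ⟨c • y, ⟨y, hy, rfl⟩, rfl⟩

theorem IsPGroup.exists_le_conjAct_smul [Finite G] {p : ℕ} [Fact p.Prime] {K P P' : Subgroup G}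
    (hP : IsPGroup p P) (hind : ¬ p ∣ P.relIndex K) (hP' : IsPGroup p P')
    (hP'K : P' ≤ K) : ∃ k ∈ K, P' ≤ toConjAct k • P := by
  let S : Sylow p K := (hP.comap_of_injective K.subtype K.subtype_injective).toSylow hind
  obtain ⟨_, hS'⟩ := (hP'.comap_of_injective K.subtype K.subtype_injective).exists_le_sylow
  obtain ⟨k, rfl⟩ := MulAction.exists_smul_eq K S ‹_›
  refine ⟨k, k.2, fun x hx => ?_⟩
  have hxk := hS' (show (⟨x, hP'K hx⟩ : K) ∈ P'.comap K.subtype from hx)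
  rw [Sylow.smul_def, Sylow.pointwise_smul_def, Subgroup.mem_pointwise_smul_iff_inv_smul_mem] at hxk
  rw [Subgroup.mem_pointwise_smul_iff_inv_smul_mem, ← map_inv]
  rw [← map_inv] at hxk
  exact hxk

theorem IsPGroup.disjoint_of_not_dvd [Finite G] {q : ℕ} [Fact q.Prime] {N Q : Subgroup G}
    (hQ : IsPGroup q Q) (hqN : ¬ q ∣ Nat.card N) : Disjoint N Q := by
  obtain ⟨k, hk⟩ := hQ.exists_card_eq
  refine disjoint_of_coprime_natCard ?_
  rw [hk]
  exact Nat.Coprime.pow_right _ ((Nat.Prime.coprime_iff_not_dvd Fact.out).mpr hqN).symm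

theorem IsPGroup.inf_centralizer_ne_bot [Finite G] {p : ℕ} [Fact p.Prime] {N Q : Subgroup G}
    [N.Normal] (hQ : IsPGroup p Q) (hp : p ∣ Nat.card N) : N ⊓ centralizer Q ≠ ⊥ := by
  obtain ⟨n, hn, hn1⟩ := (hQ.map (toConjAct : G ≃* ConjAct G).toMonoidHom
    ).exists_fixed_point_of_prime_dvd_card_of_fixed_point N hp (a := 1)
      fun c => smul_one (c : ConjAct G)
  rw [Subgroup.ne_bot_iff_exists_ne_one]
  refine ⟨⟨n, n.2, mem_centralizer_iff.mpr fun u hu => ?_⟩, fun h => hn1 ?_⟩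
  · have := congrArg Subtype.val (hn ⟨toConjAct u, mem_map_of_mem _ hu⟩)
    rw [Subgroup.smul_def, ConjAct.Subgroup.val_conj_smul, toConjAct_smul] at this
    exact mul_inv_eq_iff_eq_mul.mp this
  · have h' : (n : G) = 1 := congrArg Subtype.val h
    exact (Subtype.ext h').symm

theorem IsPGroup.exists_sylow_fixed [Finite G] {q : ℕ} [Fact q.Prime] {N Q : Subgroup G}
    [N.Normal] (hQ : IsPGroup q Q) (hqN : ¬ q ∣ Nat.card N) (r : ℕ) [Fact r.Prime] :
    ∃ P : Sylow r N, ∀ u ∈ Q, toConjAct u • P = P := by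
  obtain ⟨P, hP⟩ := (hQ.map (toConjAct : G ≃* ConjAct G).toMonoidHom
    ).nonempty_fixed_point_of_prime_not_dvd_card (Sylow r N) fun h =>
      hqN (h.trans ((default : Sylow r N).card_dvd_index.trans (index_dvd_card _)))
  exact ⟨P, fun u hu => hP ⟨toConjAct u, mem_map_of_mem _ hu⟩⟩

/-- `Q` and `g Q g⁻¹` are Sylow `q`-subgroups of the stabiliser `K` of `g • P` in `N Q`, so some
`k ∈ K` conjugates one to the other. Then `k⁻¹ g ∈ N Q` normalises `Q`, and `C_N(Q) = 1` forces
`k⁻¹ g ∈ Q`. -/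
theorem Sylow.eq_conjAct_smul_of_fixed [Finite G] {q r : ℕ} [Fact q.Prime]
    {N Q : Subgroup G} [N.Normal] (hQ : IsPGroup q Q) (hqN : ¬ q ∣ Nat.card N)
    (hC : N ⊓ centralizer Q = ⊥) {P : Sylow r N} {g : G} (hg : g ∈ N)
    (hP : ∀ u ∈ Q, toConjAct u • P = P)
    (hgP : ∀ u ∈ Q, toConjAct u • toConjAct g • P = toConjAct g • P) :
    P = toConjAct g • P := by
  set K : Subgroup G := (stabilizer (ConjAct G) (toConjAct g • P)).comap
    (toConjAct : G ≃* ConjAct G).toMonoidHom ⊓ (N ⊔ Q)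
  have hQK : Q ≤ K := fun u hu => ⟨hgP u hu, mem_sup_right hu⟩
  have hgQK : toConjAct g • Q ≤ K := by
    intro x hx
    rw [mem_pointwise_smul_iff_inv_smul_mem, ← map_inv, toConjAct_smul, inv_inv] at hx
    have hx' : x = g * (g⁻¹ * x * g) * g⁻¹ := by group
    refine mem_inf.mpr ⟨?_, ?_⟩
    · show toConjAct x • toConjAct g • P = toConjAct g • P
      rw [hx', map_mul, map_mul, mul_smul, mul_smul, map_inv, inv_smul_smul, hP _ hx]
    · rw [hx']
      exact mul_mem (mul_mem (mem_sup_left hg) (mem_sup_right hx)) (inv_mem (mem_sup_left hg))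
  obtain ⟨k, hkK, hk⟩ := hQ.exists_le_conjAct_smul
    (fun h => hqN (h.trans (relIndex_dvd_card_of_le_sup hQK inf_le_right)))
    (hQ.of_equiv (Subgroup.equivSMul (toConjAct g) Q)) hgQK
  have hnorm : k⁻¹ * g ∈ normalizer Q := by
    have heq : toConjAct g • Q = toConjAct k • Q := eq_of_le_of_card_ge hk (by
      rw [← Nat.card_congr (Subgroup.equivSMul (toConjAct g) Q).toEquiv,
        ← Nat.card_congr (Subgroup.equivSMul (toConjAct k) Q).toEquiv])
    rw [← conjAct_pointwise_smul_iff, map_mul, mul_smul, heq, map_inv, inv_smul_smul]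
  obtain ⟨m, hm, u, hu, hmu⟩ : ∃ m ∈ N, ∃ u ∈ Q, m * u = k⁻¹ * g := by
    have : k⁻¹ * g ∈ N ⊔ Q := mul_mem (inv_mem (mem_inf.mp hkK).2) (mem_sup_left hg)
    rwa [← SetLike.mem_coe, normal_mul, Set.mem_mul] at this
  have hm1 : m = 1 := by
    have hmQ : m ∈ normalizer Q := by
      rw [← mul_inv_eq_of_eq_mul hmu.symm]
      exact mul_mem hnorm (inv_mem (le_normalizer hu))
    exact mem_bot.mp
      (hC ▸ ⟨hm, mem_centralizer_of_mem_normalizer (hQ.disjoint_of_not_dvd hqN) hm hmQ⟩)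
  calc P = toConjAct u • P := (hP u hu).symm
    _ = toConjAct k⁻¹ • toConjAct g • P := by rw [← mul_smul, ← map_mul, ← hmu, hm1, one_mul]
    _ = toConjAct g • P := by rw [map_inv, inv_smul_eq_iff]; exact hkK.1.symm

theorem Sylow.eq_of_fixed_of_not_dvd [Finite G] {q r : ℕ} [Fact q.Prime] [Fact r.Prime]
    {N Q : Subgroup G} [N.Normal] (hQ : IsPGroup q Q) (hqN : ¬ q ∣ Nat.card N)
    (hC : N ⊓ centralizer Q = ⊥) {P₁ P₂ : Sylow r N} (h₁ : ∀ u ∈ Q, toConjAct u • P₁ = P₁)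
    (h₂ : ∀ u ∈ Q, toConjAct u • P₂ = P₂) : P₁ = P₂ := by
  obtain ⟨n, rfl⟩ := MulAction.exists_smul_eq N P₁ P₂
  rw [← Sylow.toConjAct_smul_eq_smul] at h₂ ⊢
  exact eq_conjAct_smul_of_fixed hQ hqN hC n.2 h₁ h₂

theorem exists_le_normalizer_of_sylow_fixed [Finite G] {N H : Subgroup G} [N.Normal]
    (hN : ∀ p, p.Prime → ¬ IsPGroup p N)
    (hH : ∀ (r : ℕ) [Fact r.Prime], ∃ P : Sylow r N, ∀ h ∈ H, toConjAct h • P = P) :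
    ∃ P ≤ N, P ≠ ⊥ ∧ P ≠ N ∧ H ≤ normalizer P := by
  obtain ⟨r, hr, hrN⟩ :=
    Nat.exists_prime_and_dvd fun h => hN 2 Nat.prime_two (IsPGroup.of_card (n := 0) h)
  have := Fact.mk hr
  obtain ⟨P, hHP⟩ := hH r
  refine ⟨(P : Subgroup N).map N.subtype, map_subtype_le _, ?_, fun hPN => ?_, fun h hh => ?_⟩
  · rw [Ne, map_eq_bot_iff_of_injective _ N.subtype_injective]
    exact P.ne_bot_of_dvd_card hrN
  · exact hN r hr (hPN ▸ P.2.map N.subtype)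
  · rw [← conjAct_pointwise_smul_iff, ← Sylow.map_subtype_smul, hHP h hh]

theorem exists_le_normalizer_of_isPGroup [Finite G] {q : ℕ} [Fact q.Prime] {N Q H : Subgroup G}
    [N.Normal] (hQ : IsPGroup q Q) (hQN : ¬ Q ≤ centralizer N) (hHQ : H ≤ normalizer Q)
    (hN : ∀ p, p.Prime → ¬ IsPGroup p N) :
    ∃ P ≤ N, P ≠ ⊥ ∧ P ≠ N ∧ H ≤ normalizer P := by
  by_cases hC : N ⊓ centralizer Q = ⊥
  · have hqN : ¬ q ∣ Nat.card N := fun h => hQ.inf_centralizer_ne_bot h hC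
    refine exists_le_normalizer_of_sylow_fixed hN fun r _ => ?_
    obtain ⟨P, hP⟩ := hQ.exists_sylow_fixed hqN r
    refine ⟨P, fun h hh => (Sylow.eq_of_fixed_of_not_dvd hQ hqN hC hP fun u hu => ?_).symm⟩
    have hu' : h⁻¹ * u * h ∈ Q := by
      simpa using (mem_normalizer_iff.mp (inv_mem (hHQ hh)) u).mp hu
    rw [show u = h * (h⁻¹ * u * h) * h⁻¹ by group, map_mul, map_mul, mul_smul, mul_smul, map_inv,
      inv_smul_smul, hP _ hu']
  · refine ⟨N ⊓ centralizer Q, inf_le_left, hC, fun hNC => hQN ?_, le_normalizer_iff.mpr ?_⟩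
    · exact le_centralizer_iff.mp (inf_eq_left.mp hNC)
    · intro h hh x hx
      exact ⟨‹N.Normal›.conj_mem x hx.1 h,
        le_normalizer_iff.mp (normalizer_le_normalizer_centralizer Q) h (hHQ hh) x hx.2⟩

theorem exists_le_normalizer_of_isSolvable [Finite G] {N H : Subgroup G} [N.Normal]
    [Group.IsSolvable H] (hHN : centralizer N ⊓ H = ⊥) (hN : ∀ p, p.Prime → ¬ IsPGroup p N) :
    ∃ P ≤ N, P ≠ ⊥ ∧ P ≠ N ∧ H ≤ normalizer P := by
  rcases subsingleton_or_nontrivial H with hH | hH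
  · refine exists_le_normalizer_of_sylow_fixed hN fun r _ => ⟨default, fun h hh => ?_⟩
    rw [show h = 1 from congrArg Subtype.val (Subsingleton.elim (⟨h, hh⟩ : H) 1), map_one, one_smul]
  obtain ⟨q, Q, hq, hQchar, hQ, hQp, -⟩ :=
    Group.IsSolvable.exists_isPGroup_characteristic (G := H)
  have := Fact.mk hq
  refine exists_le_normalizer_of_isPGroup (hQp.map H.subtype) (fun hle => hQ ?_) ?_ hN
  · have := le_inf hle (map_subtype_le Q)
    rwa [hHN, le_bot_iff, map_eq_bot_iff_of_injective _ H.subtype_injective] at this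
  · simpa [normalizer_eq_top, ← MonoidHom.range_eq_map] using le_normalizer_map H.subtype (H := Q)

namespace MulAction

variable {Ω : Type*} [MulAction G Ω]

theorem IsQuasiPreprimitive.isPretransitive_of_ne_bot [FaithfulSMul G Ω] [IsQuasiPreprimitive G Ω]
    {N : Subgroup G} [N.Normal] (hN : N ≠ ⊥) : IsPretransitive N Ω := by
  refine isPretransitive_of_normal fun h => hN (eq_bot_iff.mpr fun n hn => mem_bot.mpr ?_)
  refine eq_of_smul_eq_smul (α := Ω) fun a => ?_
  rw [one_smul]
  exact mem_fixedPoints.mp (h ▸ Set.mem_univ a) ⟨n, hn⟩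

theorem card_eq_of_isPretransitive [IsMulCommutative G] [FaithfulSMul G Ω] [IsPretransitive G Ω]
    [Nonempty Ω] : Nat.card G = Nat.card Ω := by
  obtain ⟨a⟩ := ‹Nonempty Ω›
  have hstab : stabilizer G a = ⊥ := by
    refine eq_bot_iff.mpr fun g hg => mem_bot.mpr (eq_of_smul_eq_smul (α := Ω) fun b => ?_)
    obtain ⟨h, rfl⟩ := exists_smul_eq G a b
    rw [smul_smul, IsMulCommutative.is_comm.comm g h, mul_smul, mem_stabilizer_iff.mp hg, one_smul]
  have key := card_mul_index (stabilizer G a)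
  rw [index_stabilizer_of_transitive, hstab, card_bot, one_mul] at key
  exact key.symm

theorem inf_stabilizer_eq_bot [Finite G] {N : Subgroup G} [IsPretransitive N Ω]
    (hN : Nat.card N ≤ Nat.card Ω) (a : Ω) : N ⊓ stabilizer G a = ⊥ := by
  have key := card_mul_index (stabilizer N a)
  rw [index_stabilizer_of_transitive] at key
  have hΩ : 0 < Nat.card Ω := Nat.pos_of_ne_zero fun h => by
    rw [h, mul_zero] at key
    exact Nat.card_pos.ne' key.symm
  have hstab : stabilizer N a = ⊥ :=
    (card_le_one_iff_eq_bot _).mp (Nat.le_of_mul_le_mul_right (by omega) hΩ)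
  refine eq_bot_iff.mpr fun x hx => mem_bot.mpr ?_
  have hx' : (⟨x, hx.1⟩ : N) ∈ stabilizer N a := hx.2
  rw [hstab, mem_bot] at hx'
  exact congrArg Subtype.val hx'

theorem IsPreprimitive.exists_card_eq_prime_pow [Finite G] [Group.IsSolvable G] [FaithfulSMul G Ω]
    [IsPreprimitive G Ω] [Nontrivial Ω] : ∃ p n : ℕ, p.Prime ∧ Nat.card Ω = p ^ n := by
  have : Nontrivial G := by
    obtain ⟨a, b, hab⟩ := exists_pair_ne Ω
    obtain ⟨g, rfl⟩ := exists_smul_eq G a b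
    exact ⟨⟨g, 1, fun h => hab (by rw [h, one_smul])⟩⟩
  obtain ⟨p, Q, hp, hQchar, hQ, hQp, hQcomm⟩ :=
    Group.IsSolvable.exists_isPGroup_characteristic (G := G)
  have := IsQuasiPreprimitive.isPretransitive_of_ne_bot (Ω := Ω) hQ
  have := Fact.mk hp
  obtain ⟨n, hn⟩ := hQp.exists_card_eq
  exact ⟨p, n, hp, (card_eq_of_isPretransitive (G := Q)).symm.trans hn⟩

theorem IsPreprimitive.exists_isPGroup_of_normal [Finite G] [FaithfulSMul G Ω] [IsPreprimitive G Ω]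
    [Nontrivial Ω] {N : Subgroup G} [N.Normal] [Group.IsSolvable (G ⧸ N)] (hN : N ≠ ⊥)
    (hNΩ : Nat.card N ≤ Nat.card Ω) (hC : centralizer (N : Set G) = ⊥) :
    ∃ p, p.Prime ∧ IsPGroup p N := by
  by_contra! hp
  obtain ⟨a⟩ := (inferInstance : Nonempty Ω)
  have := IsQuasiPreprimitive.isPretransitive_of_ne_bot (Ω := Ω) hN
  have hNH := inf_stabilizer_eq_bot hNΩ a
  have := isSolvable_of_inf_eq_bot hNH
  obtain ⟨P, hPN, hP, hPN', hHP⟩ :=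
    exists_le_normalizer_of_isSolvable (H := stabilizer G a) (by rw [hC, bot_inf_eq]) hp
  rcases eq_bot_or_le_of_isCoatom (IsPreprimitive.isCoatom_stabilizer_of_isPreprimitive G a) hNH
    hPN hHP with h | h
  exacts [hP h, hPN' (le_antisymm hPN h)]

end MulAction

end

theorem isPreprimitive_of_image_eq_or_disjoint {Ω : Type*} (S : Subgroup (Equiv.Perm Ω))
    (hStrans : ∀ a b : Ω, ∃ σ ∈ S, σ a = b)
    (hSprim : ∀ B : Set Ω,
      (∀ σ ∈ S, (fun x => σ x) '' B = B ∨ Disjoint ((fun x => σ x) '' B) B) →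
      B.Subsingleton ∨ B = Set.univ) :
    MulAction.IsPreprimitive S Ω where
  exists_smul_eq a b := let ⟨σ, hσ, h⟩ := hStrans a b; ⟨⟨σ, hσ⟩, h⟩
  isTrivialBlock_of_isBlock {B} hB :=
    hSprim B fun σ hσ => MulAction.isBlock_iff_smul_eq_or_disjoint.mp hB ⟨σ, hσ⟩

/-- Let `A` be a finite almost simple group with socle `T` (so `T` is a
nonabelian simple normal subgroup of `A` with trivial centralizer, and `A/T` is solvable
by the Schreier conjecture).  Let `S` be a primitive permutation group on a finite set
`Ω` with `|Ω| = |T|` (transitive, with no nontrivial invariant partition, i.e. every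
block is trivial).  Then `S` is not isomorphic to any subgroup of `A`. -/
theorem stmt12 {A : Type*} [Group A] [Finite A] (T : Subgroup A) [T.Normal]
    (hTsimple : IsSimpleGroup T) (hTnonab : ∃ a b : T, a * b ≠ b * a)
    (hcent : Subgroup.centralizer (T : Set A) = ⊥)
    (hsolv : IsSolvable (A ⧸ T))
    {Ω : Type*} [Finite Ω] (hΩ : Nat.card Ω = Nat.card T)
    (S : Subgroup (Equiv.Perm Ω))
    (hStrans : ∀ a b : Ω, ∃ σ ∈ S, σ a = b)
    (hSprim : ∀ B : Set Ω,
      (∀ σ ∈ S, (fun x => σ x) '' B = B ∨ Disjoint ((fun x => σ x) '' B) B) →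
      B.Subsingleton ∨ B = Set.univ) :
    ¬ ∃ f : S →* A, Function.Injective f := by
  rintro ⟨f, hf⟩
  have : MulAction.IsPreprimitive S Ω := isPreprimitive_of_image_eq_or_disjoint S hStrans hSprim
  have : Nontrivial Ω := Finite.one_lt_card_iff_nontrivial.mp (hΩ ▸ Finite.one_lt_card)
  have hT : ∀ p, p.Prime → ¬ IsPGroup p T := fun p => IsSimpleGroup.not_isPGroup hTnonab
  have : Group.IsSolvable (A ⧸ T) := hsolv
  set φ := (QuotientGroup.mk' T).comp f
  have : Group.IsSolvable (S ⧸ φ.ker) :=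
    Group.isSolvable_of_isSolvable_injective (QuotientGroup.kerLift_injective φ)
  by_cases hN : φ.ker = ⊥
  · have : Group.IsSolvable S :=
      Group.isSolvable_of_isSolvable_injective ((MonoidHom.ker_eq_bot_iff φ).mp hN)
    obtain ⟨p, n, hp, hpn⟩ := MulAction.IsPreprimitive.exists_card_eq_prime_pow (G := S) (Ω := Ω)
    exact hT p hp (IsPGroup.of_card (hΩ ▸ hpn))
  have := MulAction.IsQuasiPreprimitive.isPretransitive_of_ne_bot (Ω := Ω) hN
  have hcard : Nat.card (φ.ker.map f) = Nat.card φ.ker := card_map_of_injective hf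
  have hNT : φ.ker.map f = T := by
    refine eq_of_le_of_card_ge (fun x ⟨y, hy, hyx⟩ => ?_) ?_
    · simpa [φ, ← hyx] using hy
    · rw [hcard, ← hΩ]
      exact Nat.card_le_card_of_surjective _ (MulAction.surjective_smul _ (Classical.arbitrary Ω))
  obtain ⟨p, hp, hpN⟩ := MulAction.IsPreprimitive.exists_isPGroup_of_normal (Ω := Ω) hN
    (by rw [← hcard, hNT, hΩ]) (centralizer_eq_bot_of_map hf (by rwa [hNT]))
  exact hT p hp (hNT ▸ hpN.map f)
end

section
/- Let T be a finite nonabelian simple group of order k with an enumeration T = {t_1,…,t_k}, let D = {(t,…,t) : t ∈ T} be the full diagonal subgroup of T^k, and let g = (t_1,…,t_k) ∈ T^k. Then D ∩ g⁻¹Dg = 1 and g⁻¹ ∉ DgD; consequently Γ(T) = Cos(T^k, D, g) is a well-defined digraph (its arc relation is irreflexive and antisymmetric) and is |T|-regular. -/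
open scoped Pointwise

/-- The full diagonal subgroup `{(t,…,t) : t ∈ T}` of the direct power `ι → T`. -/
def diagSubgroup (ι : Type*) (T : Type*) [Group T] : Subgroup (ι → T) where
  carrier := {f | ∃ t : T, f = fun _ => t}
  one_mem' := ⟨1, rfl⟩
  mul_mem' := by rintro a b ⟨s, rfl⟩ ⟨t, rfl⟩; exact ⟨s * t, rfl⟩
  inv_mem' := by rintro a ⟨t, rfl⟩; exact ⟨t⁻¹, rfl⟩

/-- The arc relation of the coset digraph `Cos(G,H,g)`: the vertices are the right
cosets of `H` in `G`, and `Hx → Hy` iff `y * x⁻¹ ∈ HgH`. -/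
def cosArc {G : Type*} [Group G] (H : Subgroup G) (g : G)
    (A B : Quotient (QuotientGroup.rightRel H)) : Prop :=
  ∃ x y : G, Quotient.mk (QuotientGroup.rightRel H) x = A ∧
    Quotient.mk (QuotientGroup.rightRel H) y = B ∧
    y * x⁻¹ ∈ (H : Set G) * {g} * (H : Set G)

private lemma center_triv {T : Type*} [Group T] (hTsimple : IsSimpleGroup T)
    (hTnonab : ∃ a b : T, a * b ≠ b * a) {e : T} (he : ∀ s : T, s * e = e * s) : e = 1 := by
  rcases hTsimple.eq_bot_or_eq_top_of_normal (Subgroup.center T) inferInstance with h | h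
  · have : e ∈ Subgroup.center T := Subgroup.mem_center_iff.mpr he
    simpa [h] using this
  · obtain ⟨a, b, hab⟩ := hTnonab
    exact absurd (Subgroup.mem_center_iff.mp (h ▸ Subgroup.mem_top b) a) hab

private lemma rightMk_eq {G : Type*} [Group G] (H : Subgroup G) (a b : G) :
    Quotient.mk (QuotientGroup.rightRel H) a = Quotient.mk (QuotientGroup.rightRel H) b ↔
      a * b⁻¹ ∈ H := by
  constructor
  · intro h
    exact QuotientGroup.rightRel_apply.mp (Quotient.exact h.symm)
  · intro h
    exact (Quotient.sound (QuotientGroup.rightRel_apply.mpr h)).symm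

/-- Let `T` be a finite nonabelian simple group of order `k` with an
enumeration `t : Fin k → T` (a bijection), let `D` be the full diagonal subgroup of
`T^k` and let `g = (t 0, …, t (k-1)) ∈ T^k` (that is, the tuple `t` itself).  Then
`D ∩ g⁻¹Dg = 1` and `g⁻¹ ∉ DgD`; consequently `Γ(T) = Cos(T^k, D, g)` is a well-defined
digraph (irreflexive and antisymmetric arc relation) and is `|T|`-regular. -/
theorem stmt13 {T : Type*} [Group T] [Finite T]
    (hTsimple : IsSimpleGroup T) (hTnonab : ∃ a b : T, a * b ≠ b * a)
    (k : ℕ) (t : Fin k → T) (ht : Function.Bijective t) :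
    (diagSubgroup (Fin k) T ⊓
        (diagSubgroup (Fin k) T).map (MulAut.conj t⁻¹).toMonoidHom = ⊥) ∧
    t⁻¹ ∉ (↑(diagSubgroup (Fin k) T) : Set (Fin k → T)) * {t} * ↑(diagSubgroup (Fin k) T) ∧
    (∀ A, ¬ cosArc (diagSubgroup (Fin k) T) t A A) ∧
    (∀ A B, cosArc (diagSubgroup (Fin k) T) t A B → ¬ cosArc (diagSubgroup (Fin k) T) t B A) ∧
    (∀ A, Nat.card {B // cosArc (diagSubgroup (Fin k) T) t A B} = Nat.card T ∧
          Nat.card {B // cosArc (diagSubgroup (Fin k) T) t B A} = Nat.card T) := by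
  set D := diagSubgroup (Fin k) T with hD
  -- membership in the double coset set
  have memS : ∀ z : Fin k → T, z ∈ (↑D : Set (Fin k → T)) * {t} * ↑D ↔
      ∃ a b : T, z = (fun _ => a) * t * fun _ => b := by
    intro z
    constructor
    · rintro ⟨p, hp, r, hr, rfl⟩
      obtain ⟨q, hq, u, hu, rfl⟩ := hp
      obtain ⟨a, rfl⟩ := hq
      obtain ⟨b, rfl⟩ := hr
      rcases hu with rfl
      exact ⟨a, b, rfl⟩
    · rintro ⟨a, b, rfl⟩
      exact ⟨(fun _ => a) * t, ⟨fun _ => a, ⟨a, rfl⟩, t, rfl, rfl⟩, fun _ => b, ⟨b, rfl⟩, rfl⟩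
  -- centrality helpers
  have hcent : ∀ e : T, (∀ s : T, s * e = e * s) → e = 1 :=
    fun e he => center_triv hTsimple hTnonab he
  have hconj : ∀ e c : T, (∀ s : T, s * e * s⁻¹ = c) → e = 1 := by
    intro e c h
    have h1 : e = c := by simpa using h 1
    subst h1
    refine hcent e fun s => ?_
    calc s * e = (s * e * s⁻¹) * s := by group
    _ = e * s := by rw [h s]
  have hconj' : ∀ e c : T, (∀ s : T, s⁻¹ * e * s = c) → e = 1 := by
    intro e c h
    refine hconj e c fun s => ?_
    simpa using h s⁻¹
  -- claim 1
  have claim1 : D ⊓ D.map (MulAut.conj t⁻¹).toMonoidHom = ⊥ := by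
    rw [eq_bot_iff]
    intro f hf
    obtain ⟨hf1, hf2⟩ := hf
    obtain ⟨c, rfl⟩ := hf1
    obtain ⟨d, hd, hde⟩ := hf2
    obtain ⟨e, rfl⟩ := hd
    have hpt : ∀ i : Fin k, (t i)⁻¹ * e * t i = c := by
      intro i
      have := congrFun hde i
      simpa [MulAut.conj_apply, Pi.mul_apply, Pi.inv_apply] using this
    have he1 : e = 1 := by
      refine hconj' e c fun s => ?_
      obtain ⟨i, rfl⟩ := ht.2 s
      exact hpt i
    obtain ⟨i1, hi1⟩ := ht.2 1
    have hc1 : c = 1 := by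
      have := hpt i1
      rw [hi1, he1] at this
      simpa using this.symm
    subst hc1
    rfl
  -- claim 2
  have claim2 : t⁻¹ ∉ (↑D : Set (Fin k → T)) * {t} * ↑D := by
    rw [memS]
    rintro ⟨a, b, heq⟩
    have hs : ∀ s : T, s⁻¹ = a * s * b := by
      intro s
      obtain ⟨i, rfl⟩ := ht.2 s
      simpa [Pi.mul_apply, Pi.inv_apply] using congrFun heq i
    have hb : b = a⁻¹ := by
      have h1 := hs 1
      rw [inv_one, mul_one] at h1
      exact (inv_eq_of_mul_eq_one_right h1.symm).symm
    subst hb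
    have h1 : ∀ x : T, x = a * x⁻¹ * a⁻¹ := fun x => by simpa using hs x⁻¹
    obtain ⟨a0, b0, hab⟩ := hTnonab
    refine hab ?_
    calc a0 * b0 = (a * a0⁻¹ * a⁻¹) * (a * b0⁻¹ * a⁻¹) := by rw [← h1 a0, ← h1 b0]
    _ = a * (b0 * a0)⁻¹ * a⁻¹ := by rw [mul_inv_rev]; group
    _ = b0 * a0 := (h1 (b0 * a0)).symm
  -- arc characterization
  have arcChar : ∀ x y : Fin k → T,
      cosArc D t (Quotient.mk (QuotientGroup.rightRel D) x)
        (Quotient.mk (QuotientGroup.rightRel D) y) ↔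
      y * x⁻¹ ∈ (↑D : Set (Fin k → T)) * {t} * ↑D := by
    intro x y
    constructor
    · rintro ⟨u, v, hu, hv, hS⟩
      obtain ⟨p, hp⟩ := (rightMk_eq D u x).mp hu
      obtain ⟨q, hq⟩ := (rightMk_eq D v y).mp hv
      obtain ⟨a, b, hab⟩ := (memS _).mp hS
      rw [memS]
      refine ⟨q⁻¹ * a, b * p, ?_⟩
      have key : y * x⁻¹ = (v * y⁻¹)⁻¹ * (v * u⁻¹) * (u * x⁻¹) := by group
      rw [hp, hq, hab] at key
      rw [key]
      funext i
      simp [Pi.mul_apply, Pi.inv_apply, mul_assoc]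
    · intro h
      exact ⟨x, y, rfl, rfl, h⟩
  refine ⟨claim1, claim2, ?_, ?_, ?_⟩
  · -- irreflexive
    intro A hA
    obtain ⟨x, rfl⟩ := Quotient.exists_rep A
    rw [arcChar, memS] at hA
    obtain ⟨a, b, hab⟩ := hA
    have hti : ∀ i : Fin k, t i = a⁻¹ * b⁻¹ := by
      intro i
      have h2 : x i * (x i)⁻¹ = a * t i * b := congrFun hab i
      calc t i = a⁻¹ * (a * t i * b) * b⁻¹ := by group
      _ = a⁻¹ * (x i * (x i)⁻¹) * b⁻¹ := by rw [h2]
      _ = a⁻¹ * b⁻¹ := by group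
    obtain ⟨a0, b0, hab0⟩ := hTnonab
    have ha0 : a0 ≠ 1 := fun h => hab0 (by rw [h]; simp)
    obtain ⟨i, hi⟩ := ht.2 1
    obtain ⟨j, hj⟩ := ht.2 a0
    have : i = j := ht.1 (by rw [hti i, hti j])
    exact ha0 (by rw [← hj, ← this, hi])
  · -- antisymmetric
    intro A B h1 h2
    obtain ⟨x, rfl⟩ := Quotient.exists_rep A
    obtain ⟨y, rfl⟩ := Quotient.exists_rep B
    rw [arcChar, memS] at h1 h2
    obtain ⟨a, b, hab⟩ := h1
    obtain ⟨a', b', hab'⟩ := h2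
    refine claim2 ?_
    rw [memS]
    refine ⟨b * a', b' * a, ?_⟩
    have h0 : ((fun _ => a) * t * fun _ => b) * ((fun _ => a') * t * fun _ => b') = 1 := by
      rw [← hab, ← hab']; group
    have h3 : ((fun _ => a') * t * fun _ => b') =
        ((fun _ => a) * t * fun _ => b)⁻¹ :=
      (inv_eq_of_mul_eq_one_right h0).symm
    have key : t⁻¹ = (fun _ => b) * ((fun _ => a') * t * (fun _ => b')) * (fun _ => a) := by
      rw [h3]; group
    show t⁻¹ = ((fun _ => b) * (fun _ => a') : Fin k → T) * t *
      ((fun _ => b') * (fun _ => a) : Fin k → T)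
    rw [key]; group
  · -- regularity
    intro A
    obtain ⟨x, rfl⟩ := Quotient.exists_rep A
    constructor
    · -- out-degree
      have hf : Function.Bijective (fun c : T =>
          (⟨Quotient.mk (QuotientGroup.rightRel D) (t * (fun _ => c) * x), by
            rw [arcChar, memS]
            refine ⟨1, c, ?_⟩
            show t * (fun _ => c) * x * x⁻¹ = (1 : Fin k → T) * t * fun _ => c
            group⟩ :
          {B // cosArc D t (Quotient.mk (QuotientGroup.rightRel D) x) B})) := by
        constructor
        · intro c c' hcc
          have := (rightMk_eq D _ _).mp (congrArg Subtype.val hcc)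
          obtain ⟨e, he⟩ := this
          have hpt : ∀ i : Fin k, t i * (c * c'⁻¹) * (t i)⁻¹ = e := by
            intro i
            have h2 : (t i * c * x i) * (t i * c' * x i)⁻¹ = e := congrFun he i
            rw [← h2]; group
          have : c * c'⁻¹ = 1 := by
            refine hconj _ e fun s => ?_
            obtain ⟨i, rfl⟩ := ht.2 s
            exact hpt i
          rw [← mul_inv_eq_one]; exact this
        · rintro ⟨B, hB⟩
          obtain ⟨y, rfl⟩ := Quotient.exists_rep B
          rw [arcChar, memS] at hB
          obtain ⟨a, b, hab⟩ := hB
          refine ⟨b, Subtype.ext ?_⟩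
          show Quotient.mk _ _ = Quotient.mk _ _
          rw [rightMk_eq]
          refine ⟨a⁻¹, ?_⟩
          have hy : y = ((fun _ => a) * t * fun _ => b) * x := by
            rw [← hab]; group
          show t * (fun _ => b) * x * y⁻¹ = ((fun _ => a : Fin k → T))⁻¹
          rw [hy]; group
      rw [← Nat.card_congr (Equiv.ofBijective _ hf)]
    · -- in-degree
      have hf : Function.Bijective (fun c : T =>
          (⟨Quotient.mk (QuotientGroup.rightRel D) (t⁻¹ * (fun _ => c) * x), by
            rw [arcChar, memS]
            refine ⟨c⁻¹, 1, ?_⟩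
            show x * (t⁻¹ * (fun _ => c) * x)⁻¹ =
              ((fun _ => c : Fin k → T))⁻¹ * t * (1 : Fin k → T)
            group⟩ :
          {B // cosArc D t B (Quotient.mk (QuotientGroup.rightRel D) x)})) := by
        constructor
        · intro c c' hcc
          have := (rightMk_eq D _ _).mp (congrArg Subtype.val hcc)
          obtain ⟨e, he⟩ := this
          have hpt : ∀ i : Fin k, (t i)⁻¹ * (c * c'⁻¹) * t i = e := by
            intro i
            have h2 : ((t i)⁻¹ * c * x i) * ((t i)⁻¹ * c' * x i)⁻¹ = e := congrFun he i
            rw [← h2]; group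
          have : c * c'⁻¹ = 1 := by
            refine hconj' _ e fun s => ?_
            obtain ⟨i, rfl⟩ := ht.2 s
            exact hpt i
          rw [← mul_inv_eq_one]; exact this
        · rintro ⟨B, hB⟩
          obtain ⟨u, rfl⟩ := Quotient.exists_rep B
          rw [arcChar, memS] at hB
          obtain ⟨a, b, hab⟩ := hB
          refine ⟨a⁻¹, Subtype.ext ?_⟩
          show Quotient.mk _ _ = Quotient.mk _ _
          rw [rightMk_eq]
          refine ⟨b, ?_⟩
          have hu : u = ((fun _ => a) * t * fun _ => b)⁻¹ * x := by
            rw [← hab]; group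
          show t⁻¹ * ((fun _ => a : Fin k → T))⁻¹ * x * u⁻¹ = fun _ => b
          rw [hu]; group
      rw [← Nat.card_congr (Equiv.ofBijective _ hf)]
end

section
/- Let T be a finite nonabelian simple group of order k, let D = {(t,…,t) : t ∈ T} be the full diagonal subgroup of T^k, and let g = (t_1,…,t_k) and g' = (t'_1,…,t'_k) be elements of T^k such that {t_1,…,t_k} = {t'_1,…,t'_k} = T (both tuples enumerate all elements of T). Then Cos(T^k, D, g) ≅ Cos(T^k, D, g'): there is a bijection φ between the vertex sets such that Dx → Dy in Cos(T^k, D, g) if and only if φ(Dx) → φ(Dy) in Cos(T^k, D, g'). -/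
open scoped Pointwise

/-- Let `T` be a finite nonabelian simple group of order `k`, `D` the
full diagonal subgroup of `T^k`, and `t, t' : Fin k → T` two enumerations of `T` (i.e.
bijections, regarded as elements `g = (t_1,…,t_k)` and `g' = (t'_1,…,t'_k)` of `T^k`).
Then `Cos(T^k, D, g) ≅ Cos(T^k, D, g')`: there is a bijection `φ` of the vertex sets
with `Dx → Dy` in the first digraph iff `φ(Dx) → φ(Dy)` in the second. -/
theorem stmt14 {T : Type*} [Group T] [Finite T]
    (hTsimple : IsSimpleGroup T) (hTnonab : ∃ a b : T, a * b ≠ b * a)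
    (k : ℕ) (t t' : Fin k → T)
    (ht : Function.Bijective t) (ht' : Function.Bijective t') :
    ∃ φ : Quotient (QuotientGroup.rightRel (diagSubgroup (Fin k) T)) ≃
        Quotient (QuotientGroup.rightRel (diagSubgroup (Fin k) T)),
      ∀ A B, cosArc (diagSubgroup (Fin k) T) t A B ↔
        cosArc (diagSubgroup (Fin k) T) t' (φ A) (φ B) := by

  classical
  set D := diagSubgroup (Fin k) T with hDdef
  let σ : Fin k ≃ Fin k := (Equiv.ofBijective t' ht').trans (Equiv.ofBijective t ht).symm
  have hts : ∀ i, t (σ i) = t' i := fun i => (Equiv.ofBijective t ht).apply_symm_apply _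
  let ψ : (Fin k → T) ≃* (Fin k → T) :=
    { toFun := fun f => f ∘ σ
      invFun := fun f => f ∘ σ.symm
      left_inv := fun f => by ext i; simp
      right_inv := fun f => by ext i; simp
      map_mul' := fun f g => rfl }
  have hψg : ψ t = t' := funext hts
  have hψD : ∀ f : Fin k → T, f ∈ D ↔ ψ f ∈ D := by
    intro f
    constructor
    · rintro ⟨c, rfl⟩; exact ⟨c, rfl⟩
    · rintro ⟨c, hc⟩
      refine ⟨c, funext fun i => ?_⟩
      have := congrFun hc (σ.symm i)
      simpa [ψ] using this
  have hmem : ∀ z : Fin k → T,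
      z ∈ (D : Set (Fin k → T)) * {t} * (D : Set (Fin k → T)) ↔
        ψ z ∈ (D : Set (Fin k → T)) * {t'} * (D : Set (Fin k → T)) := by
    intro z
    constructor
    · rintro ⟨u, ⟨a, ha, w, hw, rfl⟩, v, hv, rfl⟩
      simp only [Set.mem_singleton_iff] at hw
      refine ⟨ψ a * t', ⟨ψ a, (hψD a).1 ha, t', rfl, rfl⟩, ψ v, (hψD v).1 hv, ?_⟩
      simp only [map_mul, ← hψg, hw]
    · rintro h
      obtain ⟨u, ⟨a, ha, w, hw, rfl⟩, v, hv, hz⟩ := h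
      simp only [Set.mem_singleton_iff] at hw
      have hz' : z = ψ.symm a * t * ψ.symm v := by
        apply ψ.injective
        simp only [map_mul, MulEquiv.apply_symm_apply, hψg]
        rw [← hz, hw]
      rw [hz']
      refine ⟨ψ.symm a * t, ⟨ψ.symm a, ?_, t, rfl, rfl⟩, ψ.symm v, ?_, rfl⟩
      · show ψ.symm a ∈ D
        rw [hψD]; simpa using ha
      · show ψ.symm v ∈ D
        rw [hψD]; simpa using hv
  have hrel : ∀ x y : Fin k → T,
      QuotientGroup.rightRel D x y ↔
        QuotientGroup.rightRel D (ψ x) (ψ y) := by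
    intro x y
    rw [QuotientGroup.rightRel_apply, QuotientGroup.rightRel_apply]
    have : ψ y * (ψ x)⁻¹ = ψ (y * x⁻¹) := by simp [map_mul]
    rw [this]
    exact hψD _
  let φ : Quotient (QuotientGroup.rightRel D) ≃ Quotient (QuotientGroup.rightRel D) :=
    Quotient.congr ψ.toEquiv hrel
  have hφmk : ∀ x : Fin k → T,
      φ (Quotient.mk (QuotientGroup.rightRel D) x) =
        Quotient.mk (QuotientGroup.rightRel D) (ψ x) := fun x => rfl
  refine ⟨φ, fun A B => ?_⟩
  constructor
  · rintro ⟨x, y, hx, hy, hxy⟩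
    exact ⟨ψ x, ψ y, by rw [← hx, ← hφmk], by rw [← hy, ← hφmk],
      by simpa [map_mul] using (hmem (y * x⁻¹)).1 hxy⟩
  · rintro ⟨x, y, hx, hy, hxy⟩
    refine ⟨ψ.symm x, ψ.symm y, ?_, ?_, ?_⟩
    · apply φ.injective
      rw [hφmk, MulEquiv.apply_symm_apply, hx]
    · apply φ.injective
      rw [hφmk, MulEquiv.apply_symm_apply, hy]
    · rw [hmem]
      simpa [map_mul] using hxy
end

section
/- Let T be a finite nonabelian simple group, and identify the index set of the construction of Γ(T) with T itself (so k = |T| and t_i = i for i ∈ T). Thus the vertex set V of Γ(T) consists of the right cosets Df of the diagonal subgroup D = {constant functions} in the group T^T of all functions T → T under pointwise multiplication, with Df → Df' if and only if f'·f⁻¹ ∈ D·ι·D, where ι : T → T is the identity function. Let M ≤ Sym(V) be the group of all right multiplications Df ↦ D(fm) for m ∈ T^T, and for each t ∈ T let λ(t) ∈ Sym(V) be the permutation Df ↦ D(f ∘ ℓ_t), where ℓ_t : T → T is left multiplication by t. Then H = ⟨M, λ(t) : t ∈ T⟩ is a group of automorphisms of Γ(T), and Γ(T) is (H,2)-arc-transitive.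 -/
open scoped Pointwise

/-- Right multiplication by `a ∈ G` as a permutation of the right cosets of `H`:
`Hx ↦ Hxa`. -/
def rmulPerm {G : Type*} [Group G] (H : Subgroup G) (a : G) :
    Equiv.Perm (Quotient (QuotientGroup.rightRel H)) where
  toFun := Quotient.map' (fun x => x * a) (by
    intro x y h
    rw [QuotientGroup.rightRel_apply] at h ⊢
    have e : y * a * (x * a)⁻¹ = y * x⁻¹ := by group
    rw [e]; exact h)
  invFun := Quotient.map' (fun x => x * a⁻¹) (by
    intro x y h
    rw [QuotientGroup.rightRel_apply] at h ⊢
    have e : y * a⁻¹ * (x * a⁻¹)⁻¹ = y * x⁻¹ := by group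
    rw [e]; exact h)
  left_inv := by
    intro q
    refine Quotient.inductionOn' q ?_
    intro x
    simp [Quotient.map'_mk'']
  right_inv := by
    intro q
    refine Quotient.inductionOn' q ?_
    intro x
    simp [Quotient.map'_mk'']

/-- The permutation `λ(t)` of the vertex set of `Γ(T)` (with index set identified with
`T`): `Df ↦ D(f ∘ ℓ_t)` where `ℓ_t` is left multiplication by `t` on `T`. -/
def lcompPerm {T : Type*} [Group T] (t : T) :
    Equiv.Perm (Quotient (QuotientGroup.rightRel (diagSubgroup T T))) where
  toFun := Quotient.map' (fun f => f ∘ (fun x => t * x)) (by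
    intro f f' h
    rw [QuotientGroup.rightRel_apply] at h ⊢
    obtain ⟨c, hc⟩ : ∃ c : T, f' * f⁻¹ = fun _ => c := h
    exact ⟨c, funext fun x => congrFun hc (t * x)⟩)
  invFun := Quotient.map' (fun f => f ∘ (fun x => t⁻¹ * x)) (by
    intro f f' h
    rw [QuotientGroup.rightRel_apply] at h ⊢
    obtain ⟨c, hc⟩ : ∃ c : T, f' * f⁻¹ = fun _ => c := h
    exact ⟨c, funext fun x => congrFun hc (t⁻¹ * x)⟩)
  left_inv := by
    intro q
    refine Quotient.inductionOn' q ?_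
    intro f
    simp only [Quotient.map'_mk'']
    congr 1
    funext x
    simp [Function.comp, mul_inv_cancel_left]
  right_inv := by
    intro q
    refine Quotient.inductionOn' q ?_
    intro f
    simp only [Quotient.map'_mk'']
    congr 1
    funext x
    simp [Function.comp, inv_mul_cancel_left]

/-!
Right multiplications preserve `y * x⁻¹` and hence every coset digraph, while precomposing with
`ℓ_u` maps the double coset `D ι D` onto itself since `a (u z) b = (a u) z b`. For arc
transitivity, every 2-arc `Df₀ → Df₁ → Df₂` is moved to `D1 → Dι → Dι²`: right multiplication
by a suitable `m` normalises `f₀` to `1` and `f₁` to `ι` up to `D`; then `f₂` becomes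
`z ↦ z c z` for some `c ∈ T`, and `λ(c⁻¹)` turns this into `z ↦ c⁻¹ z z`, i.e. into `Dι²`.
-/

open Equiv

def relAutSubgroup {V : Type*} (r : V → V → Prop) : Subgroup (Perm V) where
  carrier := {π | ∀ A B, r A B ↔ r (π A) (π B)}
  one_mem' _ _ := Iff.rfl
  mul_mem' hπ hσ A B := (hσ A B).trans (hπ _ _)
  inv_mem' {π} hπ A B := by simpa using (hπ (π⁻¹ A) (π⁻¹ B)).symm

theorem arcTrans_of_exists_map_eq {V : Type*} {r : V → V → Prop} {G : Subgroup (Perm V)}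
    {s : ℕ} (base : ℕ → V) (h : ∀ v, IsSArc r s v → ∃ g ∈ G, ∀ i ≤ s, g (v i) = base i) :
    ArcTrans r G s := by
  intro v w hv hw
  obtain ⟨gv, hgv, hv⟩ := h v hv
  obtain ⟨gw, hgw, hw⟩ := h w hw
  refine ⟨gw⁻¹ * gv, mul_mem (inv_mem hgw) hgv, fun i hi => ?_⟩
  rw [Perm.mul_apply, hv i hi, ← hw i hi, Perm.coe_inv, symm_apply_apply]

section CosetDigraph

variable {G : Type*} [Group G] (H : Subgroup G)

theorem cosArc_mk_iff {g x y : G} :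
    cosArc H g (Quotient.mk _ x) (Quotient.mk _ y) ↔ y * x⁻¹ ∈ DoubleCoset.doubleCoset g H H := by
  refine ⟨?_, fun h => ⟨x, y, rfl, rfl, h⟩⟩
  rintro ⟨x', y', hx, hy, hxy⟩
  have hx' := QuotientGroup.rightRel_apply.mp (Quotient.exact hx)
  have hy' := QuotientGroup.rightRel_apply.mp (Quotient.exact hy)
  obtain ⟨a, ha, b, hb, hab⟩ := DoubleCoset.mem_doubleCoset.mp hxy
  refine DoubleCoset.mem_doubleCoset.mpr
    ⟨y * y'⁻¹ * a, H.mul_mem hy' ha, b * (x * x'⁻¹)⁻¹, H.mul_mem hb (H.inv_mem hx'), ?_⟩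
  calc y * x⁻¹ = y * y'⁻¹ * (y' * x'⁻¹) * (x * x'⁻¹)⁻¹ := by group
    _ = _ := by rw [hab]; group

theorem rmulPerm_mk (a x : G) : rmulPerm H a (Quotient.mk _ x) = Quotient.mk _ (x * a) := rfl

theorem rmulPerm_mem_relAutSubgroup (g a : G) : rmulPerm H a ∈ relAutSubgroup (cosArc H g) := by
  intro A B
  induction A using Quotient.inductionOn with | h x => ?_
  induction B using Quotient.inductionOn with | h y => ?_
  rw [rmulPerm_mk, rmulPerm_mk, cosArc_mk_iff, cosArc_mk_iff, mul_inv_rev, mul_assoc,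
    mul_inv_cancel_left]

end CosetDigraph

section Diagonal

variable {ι T : Type*} [Group T]

theorem mem_diagSubgroup {f : ι → T} : f ∈ diagSubgroup ι T ↔ ∃ t, f = fun _ => t := Iff.rfl

theorem diag_mk_eq_mk_iff {f f' : ι → T} :
    Quotient.mk (QuotientGroup.rightRel (diagSubgroup ι T)) f = Quotient.mk _ f' ↔
      ∃ c : T, ∀ z, f' z = c * f z := by
  simp only [Quotient.eq, QuotientGroup.rightRel_apply, mem_diagSubgroup, funext_iff,
    Pi.mul_apply, mul_inv_eq_iff_eq_mul]

theorem mem_doubleCoset_diag {g f : ι → T} :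
    f ∈ DoubleCoset.doubleCoset g (diagSubgroup ι T) (diagSubgroup ι T) ↔
      ∃ a b : T, ∀ z, f z = a * g z * b := by
  simp only [DoubleCoset.mem_doubleCoset, SetLike.mem_coe, mem_diagSubgroup]
  constructor
  · rintro ⟨_, ⟨a, rfl⟩, _, ⟨b, rfl⟩, rfl⟩
    exact ⟨a, b, fun _ => rfl⟩
  · rintro ⟨a, b, h⟩
    exact ⟨_, ⟨a, rfl⟩, _, ⟨b, rfl⟩, funext h⟩

theorem cosArc_diag_mk_iff {g f f' : ι → T} :
    cosArc (diagSubgroup ι T) g (Quotient.mk _ f) (Quotient.mk _ f') ↔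
      ∃ a b : T, ∀ z, f' z = a * g z * b * f z := by
  simp only [cosArc_mk_iff, mem_doubleCoset_diag, Pi.mul_apply, Pi.inv_apply,
    mul_inv_eq_iff_eq_mul]

end Diagonal

section Gamma

variable {T : Type*} [Group T]

theorem lcompPerm_mk (u : T) (f : T → T) :
    lcompPerm u (Quotient.mk _ f) = Quotient.mk _ (f ∘ fun x => u * x) := rfl

theorem lcompPerm_mem_relAutSubgroup (u : T) :
    lcompPerm u ∈ relAutSubgroup (cosArc (diagSubgroup T T) fun x => x) := by
  intro A B
  induction A using Quotient.inductionOn with | h f => ?_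
  induction B using Quotient.inductionOn with | h f' => ?_
  rw [lcompPerm_mk, lcompPerm_mk, cosArc_diag_mk_iff, cosArc_diag_mk_iff]
  constructor
  · rintro ⟨a, b, h⟩
    exact ⟨a * u, b, fun z => by simp only [Function.comp_apply, h (u * z), mul_assoc]⟩
  · rintro ⟨a, b, h⟩
    refine ⟨a * u⁻¹, b, fun z => ?_⟩
    simpa only [Function.comp_apply, mul_inv_cancel_left, mul_assoc] using h (u⁻¹ * z)

variable (T) in
/-- The group `H = ⟨M, λ(T)⟩`. -/
def rmulLcompSubgroup : Subgroup (Perm (Quotient (QuotientGroup.rightRel (diagSubgroup T T)))) :=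
  Subgroup.closure
    ({π | ∃ m : T → T, π = rmulPerm (diagSubgroup T T) m} ∪ {π | ∃ u : T, π = lcompPerm u})

theorem rmulLcompSubgroup_le_relAutSubgroup :
    rmulLcompSubgroup T ≤ relAutSubgroup (cosArc (diagSubgroup T T) fun x => x) := by
  refine Subgroup.closure_le _ |>.mpr ?_
  rintro π (⟨m, rfl⟩ | ⟨u, rfl⟩)
  exacts [rmulPerm_mem_relAutSubgroup _ _ m, lcompPerm_mem_relAutSubgroup u]

theorem exists_mem_rmulLcompSubgroup_map_eq_pow
    {v : ℕ → Quotient (QuotientGroup.rightRel (diagSubgroup T T))}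
    (hv : IsSArc (cosArc (diagSubgroup T T) fun x => x) 2 v) :
    ∃ g ∈ rmulLcompSubgroup T, ∀ i ≤ 2, g (v i) = Quotient.mk _ fun z => z ^ i := by
  obtain ⟨f, rfl⟩ : ∃ f : ℕ → T → T, v = fun i => Quotient.mk _ (f i) :=
    ⟨fun i => (v i).out, funext fun i => (Quotient.out_eq _).symm⟩
  obtain ⟨a, b, h₁⟩ := cosArc_diag_mk_iff.mp (hv 0 two_pos)
  obtain ⟨p, q, h₂⟩ := cosArc_diag_mk_iff.mp (hv 1 one_lt_two)
  set m : T → T := fun z => (f 0 z)⁻¹ * b⁻¹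
  set t : T := (q * a)⁻¹
  refine ⟨lcompPerm t * rmulPerm _ m, mul_mem (Subgroup.subset_closure (Or.inr ⟨t, rfl⟩))
    (Subgroup.subset_closure (Or.inl ⟨m, rfl⟩)), fun i hi => ?_⟩
  rw [Perm.mul_apply, rmulPerm_mk, lcompPerm_mk, eq_comm, diag_mk_eq_mk_iff]
  interval_cases i
  · exact ⟨b⁻¹, fun z => by simp [m]⟩
  · exact ⟨a * t, fun z => by simp only [Function.comp_apply, Pi.mul_apply, h₁, m]; group⟩
  · refine ⟨p * t, fun z => ?_⟩
    simp only [Function.comp_apply, Pi.mul_apply, h₁, h₂, m, t, sq]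
    group

end Gamma

theorem stmt15_general {T : Type*} [Group T] :
    (∀ h ∈ Subgroup.closure
        ({π | ∃ m : T → T, π = rmulPerm (diagSubgroup T T) m} ∪
          {π | ∃ u : T, π = lcompPerm u}),
      ∀ A B, cosArc (diagSubgroup T T) (fun x => x) A B ↔
        cosArc (diagSubgroup T T) (fun x => x) (h A) (h B)) ∧
    ArcTrans (cosArc (diagSubgroup T T) (fun x => x))
      (Subgroup.closure
        ({π | ∃ m : T → T, π = rmulPerm (diagSubgroup T T) m} ∪
          {π | ∃ u : T, π = lcompPerm u})) 2 :=
  ⟨fun _ hh => rmulLcompSubgroup_le_relAutSubgroup hh,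
    arcTrans_of_exists_map_eq _ fun _ => exists_mem_rmulLcompSubgroup_map_eq_pow⟩

/-- Identify the index set of Construction Γ(T) with `T` itself, so
that the vertex set `V` of `Γ(T)` consists of the right cosets of the diagonal subgroup
`D` in `T^T = (T → T)`, with `Df → Df'` iff `f'·f⁻¹ ∈ D·ι·D` where `ι` is the identity
function.  Let `M` be the group of right multiplications and `λ(t)` the permutations
`Df ↦ D(f ∘ ℓ_t)`.  Then `H = ⟨M, λ(T)⟩` is a group of automorphisms of `Γ(T)`, and
`Γ(T)` is `(H,2)`-arc-transitive. -/
theorem stmt15 {T : Type*} [Group T] [Finite T]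
    (hTsimple : IsSimpleGroup T) (hTnonab : ∃ a b : T, a * b ≠ b * a) :
    (∀ h ∈ Subgroup.closure
        ({π | ∃ m : T → T, π = rmulPerm (diagSubgroup T T) m} ∪
          {π | ∃ u : T, π = lcompPerm u}),
      ∀ A B, cosArc (diagSubgroup T T) (fun x => x) A B ↔
        cosArc (diagSubgroup T T) (fun x => x) (h A) (h B)) ∧
    ArcTrans (cosArc (diagSubgroup T T) (fun x => x))
      (Subgroup.closure
        ({π | ∃ m : T → T, π = rmulPerm (diagSubgroup T T) m} ∪
          {π | ∃ u : T, π = lcompPerm u})) 2 :=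
  stmt15_general
end

section
/- Let Δ be a finite set, let H ≤ Sym(Δ) have a transitive normal subgroup N, let m ≥ 1 be an integer, and let G ≤ H ≀ S_m = H^m ⋊ S_m act on V = Δ^m by product action. Assume: (i) the projection of G to S_m is a transitive subgroup of S_m; (ii) the component of G is H, i.e., if G_1 is the stabilizer in G of the first coordinate and π_1 : G_1 → Sym(Δ) is the induced action on the first coordinate, then π_1(G_1) = H; and (iii) the base group power N^m (acting coordinatewise) is contained in G. If Γ is a (G,s)-arc-transitive digraph with vertex set V and s ≥ 2, then there exists a digraph Σ with vertex set Δ such that H is a group of automorphisms of Σ, Σ is (H,s)-arc-transitive, and Γ ≅ Σ^m. -/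
/-- `g` is an element of the wreath product `H ≀ S_m` in product action on `Δ^m`:
there are `h_i ∈ H` and `π ∈ S_m` such that the `i`-th coordinate of `g v` is the
image under `h_i` of the `π⁻¹ i`-th coordinate of `v`. -/
def InWreath {Δ : Type*} (H : Subgroup (Equiv.Perm Δ)) (m : ℕ)
    (g : Equiv.Perm (Fin m → Δ)) (h : Fin m → Equiv.Perm Δ) (π : Equiv.Perm (Fin m)) :
    Prop :=
  (∀ i, h i ∈ H) ∧ ∀ (v : Fin m → Δ) (i : Fin m), g v i = h i (v (π⁻¹ i))

/-!
The subgroup `K = N^m` of `G` is normalised by `G` and transitive on vertices, so every vertex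
has an out-neighbour and `G` is 2-arc-transitive; this forces `K` to be transitive on arcs.
Let `Σ` be the projection of the arcs of `Γ` to one coordinate. Since `G` permutes the
coordinates transitively with component `H`, every arc of `Γ` projects to an arc of `Σ` in each
coordinate, `Σ` is `H`-invariant and `N` is transitive on its arcs. Coordinatewise elements of
`K` then carry one arc of `Γ` to any pair that is an arc of `Σ` in every coordinate, so
`Γ = Σ^m`, and `s`-arcs of `Σ` lift diagonally to `s`-arcs of `Γ`.
-/

open Equiv

section Arcs

variable {V : Type*} {r : V → V → Prop}

theorem IsSArc.exists_extend {k : ℕ} {v : ℕ → V} (hv : IsSArc r k v)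
    (hout : ∀ x, ∃ y, r x y) (s : ℕ) : ∃ w, IsSArc r s w ∧ ∀ i ≤ k, w i = v i := by
  choose nxt hnxt using hout
  refine ⟨fun i => nxt^[i - k] (v (min i k)), fun i _ => ?_, fun i hi => by simp [hi]⟩
  rcases lt_or_ge i k with hik | hki
  · simpa [hik.le, Nat.succ_le_of_lt hik] using hv i hik
  · dsimp only
    rw [show i + 1 - k = (i - k) + 1 by omega, Function.iterate_succ_apply',
      min_eq_right hki, min_eq_right (by omega)]
    exact hnxt _

theorem ArcTrans.of_le {G : Subgroup (Perm V)} {k s : ℕ} (h : ArcTrans r G s) (hks : k ≤ s)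
    (hout : ∀ x, ∃ y, r x y) : ArcTrans r G k := by
  intro v w hv hw
  obtain ⟨v', hv', hvv'⟩ := hv.exists_extend hout s
  obtain ⟨w', hw', hww'⟩ := hw.exists_extend hout s
  obtain ⟨g, hg, hgvw⟩ := h v' w' hv' hw'
  exact ⟨g, hg, fun i hi => by rw [← hvv' i hi, ← hww' i hi, hgvw i (hi.trans hks)]⟩

variable {K : Subgroup (Perm V)} (hKaut : ∀ k ∈ K, ∀ u v, r u v → r (k u) (k v))
  (hKtrans : ∀ u v, ∃ k ∈ K, k u = v)
include hKaut hKtrans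

theorem exists_out_arc_of_transitive {a b : V} (hab : r a b) (x : V) : ∃ y, r x y := by
  obtain ⟨k, hk, rfl⟩ := hKtrans a x
  exact ⟨k b, hKaut k hk a b hab⟩

/-- Given arcs `u → v` and `u' → v'`, move them by `K` to arcs `v → k v` and `v → k' v'`;
an element of `G` fixing `u, v` and sending `k v` to `k' v'` then conjugates `k` into `K`. -/
theorem exists_mem_map_arc_of_conj_mem {G : Subgroup (Perm V)}
    (hnorm : ∀ g ∈ G, ∀ k ∈ K, g * k * g⁻¹ ∈ K) (h2 : ArcTrans r G 2)
    {u v u' v' : V} (huv : r u v) (hu'v' : r u' v') : ∃ k ∈ K, k u = u' ∧ k v = v' := by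
  have twoArc : ∀ x y z, r x y → r y z →
      IsSArc r 2 (fun i => if i = 0 then x else if i = 1 then y else z) := by
    intro x y z hxy hyz i hi
    interval_cases i <;> simpa
  obtain ⟨k, hk, hku⟩ := hKtrans u v
  obtain ⟨k', hk', hku'⟩ := hKtrans u' v
  have hvkv : r v (k v) := hku ▸ hKaut k hk u v huv
  have hvkv' : r v (k' v') := hku' ▸ hKaut k' hk' u' v' hu'v'
  obtain ⟨g, hg, hgX⟩ := h2 _ _ (twoArc u v (k v) huv hvkv) (twoArc u v (k' v') huv hvkv')
  have hgu : g u = u := by simpa using hgX 0 (by norm_num)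
  have hgv : g v = v := by simpa using hgX 1 (by norm_num)
  have hgkv : g (k v) = k' v' := by simpa using hgX 2 le_rfl
  refine ⟨k'⁻¹ * (g * k * g⁻¹), K.mul_mem (K.inv_mem hk') (hnorm g hg k hk), ?_, ?_⟩
  · rw [Perm.mul_apply, Perm.mul_apply, Perm.mul_apply, Perm.inv_eq_iff_eq.2 hgu.symm, hku, hgv]
    exact Perm.inv_eq_iff_eq.2 hku'.symm
  · rw [Perm.mul_apply, Perm.mul_apply, Perm.mul_apply, Perm.inv_eq_iff_eq.2 hgv.symm, hgkv]
    exact Perm.inv_eq_iff_eq.2 rfl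

end Arcs

section ProductAction

variable {ι Δ : Type*}

def Equiv.Perm.piCongrRightHom : (ι → Perm Δ) →* Perm (ι → Δ) where
  toFun := piCongrRight
  map_one' := rfl
  map_mul' _ _ := rfl

def basePower (N : Subgroup (Perm Δ)) (ι : Type*) : Subgroup (Perm (ι → Δ)) :=
  (Subgroup.pi Set.univ fun _ : ι => N).map Perm.piCongrRightHom

theorem mem_basePower {N : Subgroup (Perm Δ)} {k : Perm (ι → Δ)} :
    k ∈ basePower N ι ↔ ∃ n : ι → Perm Δ, (∀ i, n i ∈ N) ∧ piCongrRight n = k := by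
  simp only [basePower, Subgroup.mem_map, Subgroup.mem_pi, Set.mem_univ, true_implies]
  rfl

theorem piCongrRight_mem_basePower {N : Subgroup (Perm Δ)} {n : ι → Perm Δ}
    (hn : ∀ i, n i ∈ N) : piCongrRight n ∈ basePower N ι :=
  mem_basePower.2 ⟨n, hn, rfl⟩

theorem exists_mem_basePower_apply_eq {N : Subgroup (Perm Δ)}
    (hN : ∀ a b : Δ, ∃ n ∈ N, n a = b) (u v : ι → Δ) : ∃ k ∈ basePower N ι, k u = v := by
  choose n hnN hn using fun i => hN (u i) (v i)
  exact ⟨piCongrRight n, piCongrRight_mem_basePower hnN, funext hn⟩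

theorem InWreath.conj_mem_basePower {m : ℕ} {H N : Subgroup (Perm Δ)}
    {g : Perm (Fin m → Δ)} {h : Fin m → Perm Δ} {π : Perm (Fin m)} (hg : InWreath H m g h π)
    (hNnorm : ∀ x ∈ H, ∀ n ∈ N, x * n * x⁻¹ ∈ N) {k : Perm (Fin m → Δ)}
    (hk : k ∈ basePower N (Fin m)) : g * k * g⁻¹ ∈ basePower N (Fin m) := by
  obtain ⟨n, hnN, rfl⟩ := mem_basePower.1 hk
  suffices g * piCongrRight n * g⁻¹ = piCongrRight fun i => h i * n (π⁻¹ i) * (h i)⁻¹ from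
    this ▸ piCongrRight_mem_basePower fun i => hNnorm _ (hg.1 i) _ (hnN _)
  rw [mul_inv_eq_iff_eq_mul]
  ext v i
  simp [Perm.mul_apply, hg.2]

def projRel (r : (ι → Δ) → (ι → Δ) → Prop) (j : ι) (a b : Δ) : Prop :=
  ∃ p q, r p q ∧ p j = a ∧ q j = b

theorem exists_mem_apply_eq_of_projRel {N : Subgroup (Perm Δ)} {r : (ι → Δ) → (ι → Δ) → Prop}
    (hKarc : ∀ u v u' v', r u v → r u' v' → ∃ k ∈ basePower N ι, k u = u' ∧ k v = v')
    {j : ι} {a b a' b' : Δ} (hab : projRel r j a b) (hab' : projRel r j a' b') :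
    ∃ n ∈ N, n a = a' ∧ n b = b' := by
  obtain ⟨p, q, hpq, rfl, rfl⟩ := hab
  obtain ⟨p', q', hpq', rfl, rfl⟩ := hab'
  obtain ⟨k, hk, hkp, hkq⟩ := hKarc p q p' q' hpq hpq'
  obtain ⟨n, hnN, rfl⟩ := mem_basePower.1 hk
  exact ⟨n j, hnN j, congrFun hkp j, congrFun hkq j⟩

end ProductAction

section Wreath

variable {Δ : Type*} {m : ℕ} {H N : Subgroup (Perm Δ)} {G : Subgroup (Perm (Fin m → Δ))}
  {r : (Fin m → Δ) → (Fin m → Δ) → Prop}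

theorem arcTrans_of_const_arc {rΔ : Δ → Δ → Prop} (hGwr : ∀ g ∈ G, ∃ h π, InWreath H m g h π)
    (j : Fin m) {s : ℕ} (hGs : ArcTrans r G s)
    (hconst : ∀ a b, rΔ a b → r (fun _ => a) (fun _ => b)) : ArcTrans rΔ H s := by
  intro α β hα hβ
  obtain ⟨g, hg, hgαβ⟩ := hGs (fun k _ => α k) (fun k _ => β k)
    (fun k hk => hconst _ _ (hα k hk)) (fun k hk => hconst _ _ (hβ k hk))
  obtain ⟨h, π, hw⟩ := hGwr g hg
  exact ⟨h j, hw.1 j, fun k hk => by simpa [hw.2] using congrFun (hgαβ k hk) j⟩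

variable (hGaut : ∀ g ∈ G, ∀ u v, r u v → r (g u) (g v)) (j : Fin m)
  (hstab : ∀ x ∈ H, ∃ g ∈ G, ∃ h π, InWreath H m g h π ∧ π j = j ∧ h j = x)
include hGaut hstab

theorem projRel.map {x : Perm Δ} (hx : x ∈ H) {a b : Δ} (hab : projRel r j a b) :
    projRel r j (x a) (x b) := by
  obtain ⟨p, q, hpq, rfl, rfl⟩ := hab
  obtain ⟨g, hg, h, π, hw, hπ, rfl⟩ := hstab x hx
  have hπ' : π⁻¹ j = j := Perm.inv_eq_iff_eq.2 hπ.symm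
  exact ⟨g p, g q, hGaut g hg p q hpq, by rw [hw.2, hπ'], by rw [hw.2, hπ']⟩

theorem projRel_map_iff {x : Perm Δ} (hx : x ∈ H) {a b : Δ} :
    projRel r j (x a) (x b) ↔ projRel r j a b :=
  ⟨fun h => by simpa using h.map hGaut j hstab (H.inv_mem hx), (·.map hGaut j hstab hx)⟩

variable (htrans : ∀ i, ∃ g ∈ G, ∃ h π, InWreath H m g h π ∧ π i = j)
include htrans

theorem projRel_of_arc {u v : Fin m → Δ} (huv : r u v) (i : Fin m) :
    projRel r j (u i) (v i) := by
  obtain ⟨g, hg, h, π, hw, hπ⟩ := htrans i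
  have hπ' : π⁻¹ j = i := Perm.inv_eq_iff_eq.2 hπ.symm
  rw [← projRel_map_iff hGaut j hstab (hw.1 j)]
  exact ⟨g u, g v, hGaut g hg u v huv, by rw [hw.2, hπ'], by rw [hw.2, hπ']⟩

theorem arc_iff_forall_projRel (hKG : basePower N (Fin m) ≤ G)
    (hKarc : ∀ u v u' v', r u v → r u' v' → ∃ k ∈ basePower N (Fin m), k u = u' ∧ k v = v')
    (u v : Fin m → Δ) : r u v ↔ ∀ i, projRel r j (u i) (v i) := by
  refine ⟨fun huv => projRel_of_arc hGaut j hstab htrans huv, fun h => ?_⟩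
  obtain ⟨p, q, hpq, -, -⟩ := h j
  choose n hnN hnp hnq using fun i =>
    exists_mem_apply_eq_of_projRel hKarc (projRel_of_arc hGaut j hstab htrans hpq i) (h i)
  have hk := hGaut _ (hKG (piCongrRight_mem_basePower hnN)) p q hpq
  rwa [show piCongrRight n p = u from funext hnp, show piCongrRight n q = v from funext hnq]
    at hk

end Wreath

/-- **Theorem 2.** Let `H ≤ Sym(Δ)` have a transitive normal subgroup
`N`, and let `G ≤ H ≀ S_m` act on `V = Δ^m` by product action, such that (i) `G`
projects to a transitive subgroup of `S_m`, (ii) the component of `G` (the projection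
to `Sym(Δ)` of the stabiliser of the first coordinate) is `H`, and (iii) `N^m ≤ G`.
If `Γ` is a `(G,s)`-arc-transitive digraph with vertex set `V` and `s ≥ 2`, then
`Γ ≅ Σ^m` for some `(H,s)`-arc-transitive digraph `Σ` with vertex set `Δ`. -/
theorem stmt17 {Δ : Type*}
    (H N : Subgroup (Equiv.Perm Δ))
    (hNnorm : ∀ h ∈ H, ∀ n ∈ N, h * n * h⁻¹ ∈ N)
    (hNtrans : ∀ a b : Δ, ∃ n ∈ N, n a = b)
    (m : ℕ) (hm : 1 ≤ m)
    (G : Subgroup (Equiv.Perm (Fin m → Δ)))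
    -- G ≤ H ≀ S_m in product action:
    (hGwr : ∀ g ∈ G, ∃ h π, InWreath H m g h π)
    -- (i) G projects to a transitive subgroup of S_m:
    (hπtrans : ∀ i j : Fin m, ∃ g ∈ G, ∃ h π, InWreath H m g h π ∧ π i = j)
    -- (ii) the component of G is H:
    (hcomp : (H : Set (Equiv.Perm Δ)) =
      {x | ∃ g ∈ G, ∃ h π, InWreath H m g h π ∧
        π (⟨0, by omega⟩ : Fin m) = ⟨0, by omega⟩ ∧ h (⟨0, by omega⟩ : Fin m) = x})
    -- (iii) N^m ≤ G:
    (hNm : ∀ n : Fin m → Equiv.Perm Δ, (∀ i, n i ∈ N) →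
      (Equiv.piCongrRight n : Equiv.Perm (Fin m → Δ)) ∈ G)
    -- Γ, a (G,s)-arc-transitive digraph with vertex set Δ^m:
    (r : (Fin m → Δ) → (Fin m → Δ) → Prop)
    (hirr : ∀ v, ¬ r v v) (hasym : ∀ u v, r u v → ¬ r v u)
    (hGaut : ∀ g ∈ G, ∀ u v, r u v ↔ r (g u) (g v))
    (s : ℕ) (hs : 2 ≤ s) (hGs : ArcTrans r G s) :
    ∃ rΔ : Δ → Δ → Prop,
      (∀ a, ¬ rΔ a a) ∧ (∀ a b, rΔ a b → ¬ rΔ b a) ∧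
      (∀ h ∈ H, ∀ a b, rΔ a b ↔ rΔ (h a) (h b)) ∧
      ArcTrans rΔ H s ∧
      ∃ φ : (Fin m → Δ) ≃ (Fin m → Δ),
        ∀ u v, r u v ↔ ∀ i, rΔ (φ u i) (φ v i) := by
  set j : Fin m := ⟨0, by omega⟩
  have hGaut' : ∀ g ∈ G, ∀ u v, r u v → r (g u) (g v) := fun g hg u v => (hGaut g hg u v).1
  have hKG : basePower N (Fin m) ≤ G := fun k hk => by
    obtain ⟨n, hnN, rfl⟩ := mem_basePower.1 hk
    exact hNm n hnN
  have hKaut : ∀ k ∈ basePower N (Fin m), ∀ u v, r u v → r (k u) (k v) :=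
    fun k hk => hGaut' k (hKG hk)
  have hKtrans := exists_mem_basePower_apply_eq (ι := Fin m) hNtrans
  have hKarc : ∀ u v u' v', r u v → r u' v' →
      ∃ k ∈ basePower N (Fin m), k u = u' ∧ k v = v' := fun u v u' v' huv hu'v' =>
    exists_mem_map_arc_of_conj_mem hKaut hKtrans
      (fun g hg k hk => (hGwr g hg).elim fun _ ⟨_, hw⟩ => hw.conj_mem_basePower hNnorm hk)
      (hGs.of_le hs (exists_out_arc_of_transitive hKaut hKtrans huv)) huv hu'v'
  have hstab : ∀ x ∈ H, ∃ g ∈ G, ∃ h π, InWreath H m g h π ∧ π j = j ∧ h j = x :=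
    fun x hx => (Set.ext_iff.1 hcomp x).1 hx
  have hr := arc_iff_forall_projRel hGaut' j hstab (fun i => hπtrans i j) hKG hKarc
  have hconst : ∀ a b, projRel r j a b → r (fun _ => a) (fun _ => b) :=
    fun a b hab => (hr _ _).2 fun _ => hab
  exact ⟨projRel r j, fun a ha => hirr _ (hconst a a ha),
    fun a b hab hba => hasym _ _ (hconst a b hab) (hconst b a hba),
    fun x hx a b => (projRel_map_iff hGaut' j hstab hx).symm,
    arcTrans_of_const_arc hGwr j hGs hconst, Equiv.refl _, hr⟩
end
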